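/- arXiv:2007.06852 — 5 statements merged into one kernel-verified Lean document; each statement's English description precedes it below -/
import Mathlib

section
/- Assume additionally that Ψ and g are differentiable, and let β, γ > 0. Let η be an everywhere positive, continuously differentiable probability density on ℝ^d such that Ψ is Bochner integrable with respect to η(θ)dθ, let Z₁ := ∫_{ℝ^d} exp(−β|r|²/2) dr, and define ρ(θ,r) := (exp(−β|r|²/2)/Z₁)·η(θ). Suppose ρ satisfies the stationary kinetic Fokker–Planck equation pointwise: for all (θ,r), ⟨∇_θρ(θ,r), r⟩ − ∇_r·[ρ(θ,r)(∇F'(η)(θ) + γ r)] − γβ⁻¹Δ_rρ(θ,r) = 0, where Δ_r is the Laplacian in r. Then ∇η(θ) + β η(θ) ∇F'(η)(θ) = 0 for every θ; consequently exp(−βF'(η)) is Lebesgue integrable and η(θ) = exp(−βF'(η)(θ))/Z₂(η) for every θ, where Z₂(η) := ∫ exp(−βF'(η)(θ)) dθ. (Second part of Theorem 4.1: the θ-marginal of a stationary solution solves the Boltzmann fixed point equation.) -/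
/-!
For the product ansatz `ρ(θ, r) = M(r) η(θ)` with the Maxwellian `M ∝ exp(−β|r|²/2)`, whose
gradient is `−β M(r) r`, the friction and diffusion terms in `r` cancel:
`∇_r·[M (v + γr)] = M (γd − β⟨r, v + γr⟩)` while `γβ⁻¹ Δ_r M = M (−γd + βγ|r|²)`.
The stationary equation thus reduces to `M(r) ⟨∇η + βη∇F'(η), r⟩ = 0` for all `r`, and
`r = ∇η + βη∇F'(η)` gives the first claim. Then `η exp(βF'(η))` has zero derivative, so `η` is a
constant multiple of `exp(−βF'(η))`; the constant is nonzero because `∫ η = 1`, which yields both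
the integrability and the Boltzmann formula.
-/

open MeasureTheory
open scoped RealInnerProductSpace

/-- Divergence of a vector field on `ℝ^d`: the trace of its Fréchet derivative. -/
noncomputable def vdiv {d : ℕ}
    (v : EuclideanSpace ℝ (Fin d) → EuclideanSpace ℝ (Fin d))
    (x : EuclideanSpace ℝ (Fin d)) : ℝ :=
  LinearMap.trace ℝ (EuclideanSpace ℝ (Fin d)) (fderiv ℝ v x)

section Calculus

variable {V : Type*} [NormedAddCommGroup V] [InnerProductSpace ℝ V] [CompleteSpace V]

theorem gradient_const_mul {f : V → ℝ} {x : V} (hf : DifferentiableAt ℝ f x) (c : ℝ) :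
    gradient (fun y => c * f y) x = c • gradient f x := by
  simp only [gradient, fderiv_const_mul hf, map_smul]

theorem hasGradientAt_const_mul_exp_neg_mul_norm_sq (β c : ℝ) (x : V) :
    HasGradientAt (fun y : V => c * Real.exp (-β * ‖y‖ ^ 2 / 2))
      ((-β * (c * Real.exp (-β * ‖x‖ ^ 2 / 2))) • x) x := by
  have h := ((((hasStrictFDerivAt_norm_sq x).hasFDerivAt).const_mul (-β / 2)).exp).const_mul c
  have hβ2 : ∀ y : V, -β * ‖y‖ ^ 2 / 2 = -β / 2 * ‖y‖ ^ 2 := fun y => by ring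
  simp only [hβ2]
  rw [hasGradientAt_iff_hasFDerivAt]
  refine h.congr_fderiv ?_
  ext w
  simp only [smul_apply, coe_innerSL_apply, nsmul_eq_mul, Nat.cast_ofNat, smul_eq_mul, neg_mul,
    neg_smul, map_neg, map_smul, neg_apply, InnerProductSpace.toDual_apply_apply]
  ring

theorem mul_exp_eq_of_gradient_add_smul_gradient_eq_zero {η Φ : V → ℝ} {β : ℝ}
    (hη : Differentiable ℝ η) (hΦ : Differentiable ℝ Φ)
    (h : ∀ x, gradient η x + (β * η x) • gradient Φ x = 0) (x y : V) :
    η x * Real.exp (β * Φ x) = η y * Real.exp (β * Φ y) := by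
  have hderiv : ∀ z, HasFDerivAt (fun z => η z * Real.exp (β * Φ z)) (0 : V →L[ℝ] ℝ) z := by
    intro z
    refine ((hη z).hasFDerivAt.mul ((hΦ z).hasFDerivAt.const_mul β).exp).congr_fderiv ?_
    ext w
    have hw := congrArg (fun v : V => ⟪v, w⟫) (h z)
    simp only [inner_add_left, real_inner_smul_left, inner_gradient_left, inner_zero_left] at hw
    simp only [add_apply, smul_apply, smul_eq_mul, zero_apply]
    linear_combination Real.exp (β * Φ z) * hw
  exact is_const_of_fderiv_eq_zero (fun z => (hderiv z).differentiableAt)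
    (fun z => (hderiv z).fderiv) x y

end Calculus

section Density

variable {X : Type*} [MeasurableSpace X] {μ : Measure X}

theorem integrable_and_eq_div_integral_of_eq_const_mul {η w : X → ℝ} {C : ℝ}
    (hηw : ∀ x, η x = C * w x) (hη : ∫ x, η x ∂μ = 1) :
    Integrable w μ ∧ ∀ x, η x = w x / ∫ x, w x ∂μ := by
  have hC : C ≠ 0 := by
    rintro rfl
    simp [hηw] at hη
  have hw : w = fun x => C⁻¹ * η x := by
    funext x
    rw [hηw x, inv_mul_cancel_left₀ hC]
  have hint : Integrable η μ := Integrable.of_integral_ne_zero (by simp [hη])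
  have hI : ∫ x, w x ∂μ = C⁻¹ := by rw [hw, integral_const_mul, hη, mul_one]
  refine ⟨hw ▸ hint.const_mul _, fun x => ?_⟩
  rw [hI, div_inv_eq_mul, hηw x, mul_comm]

end Density

section Divergence

variable {d : ℕ}
local notation "E" => EuclideanSpace ℝ (Fin d)

theorem vdiv_smul {f : E → ℝ} {u : E → E} {x : E} (hf : DifferentiableAt ℝ f x)
    (hu : DifferentiableAt ℝ u x) :
    vdiv (fun y => f y • u y) x = f x * vdiv u x + ⟪gradient f x, u x⟫ := by
  rw [vdiv, vdiv, fderiv_fun_smul hf hu, ContinuousLinearMap.toLinearMap_add, map_add,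
    ContinuousLinearMap.toLinearMap_smul, map_smul, smul_eq_mul, inner_gradient_left]
  congr 1
  exact LinearMap.trace_smulRight _ _

theorem vdiv_const_add_smul (v : E) (γ : ℝ) (x : E) :
    vdiv (fun y => v + γ • y) x = γ * d := by
  have h : HasFDerivAt (fun y : E => v + γ • y) (γ • ContinuousLinearMap.id ℝ E) x :=
    ((hasFDerivAt_id x).const_smul γ).const_add v
  rw [vdiv, h.fderiv, ContinuousLinearMap.toLinearMap_smul, map_smul, ContinuousLinearMap.coe_id,
    LinearMap.trace_id, finrank_euclideanSpace_fin, smul_eq_mul]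

theorem vdiv_smul_const_add_smul {m : E → ℝ} {κ : ℝ} (hm : ∀ r, HasGradientAt m ((κ * m r) • r) r)
    (v : E) (γ : ℝ) (r : E) :
    vdiv (fun r => m r • (v + γ • r)) r = m r * (γ * d + κ * ⟪r, v + γ • r⟫) := by
  have hu : DifferentiableAt ℝ (fun r : E => v + γ • r) r := by fun_prop
  rw [vdiv_smul (hm r).differentiableAt hu, vdiv_const_add_smul, (hm r).gradient,
    real_inner_smul_left]
  ring

theorem vdiv_smul_const_add_smul_add_vdiv_gradient {m : E → ℝ} {β : ℝ} (hβ : β ≠ 0)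
    (hm : ∀ r, HasGradientAt m ((-β * m r) • r) r) (v : E) (γ : ℝ) (r : E) :
    vdiv (fun r => m r • (v + γ • r)) r + γ * β⁻¹ * vdiv (gradient m) r = -β * m r * ⟪r, v⟫ := by
  have hgrad : gradient m = fun r => m r • (0 + (-β) • r) := by
    funext r
    rw [(hm r).gradient, zero_add, smul_smul, mul_comm]
  rw [hgrad, vdiv_smul_const_add_smul hm, vdiv_smul_const_add_smul hm]
  simp only [inner_add_right, zero_add, real_inner_smul_right, real_inner_self_eq_norm_sq]
  field_simp
  ring

theorem gradient_add_smul_eq_zero_of_stationary {η : E → ℝ} {θ v : E}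
    (hη : DifferentiableAt ℝ η θ) {β γ Z : ℝ} (hβ : β ≠ 0) (hZ : Z ≠ 0)
    (h : ∀ r : E, ⟪gradient (fun θ' => Real.exp (-β * ‖r‖ ^ 2 / 2) / Z * η θ') θ, r⟫
      - vdiv (fun r' => (Real.exp (-β * ‖r'‖ ^ 2 / 2) / Z * η θ) • (v + γ • r')) r
      - (γ * β⁻¹) * vdiv (fun r' =>
          gradient (fun r'' => Real.exp (-β * ‖r''‖ ^ 2 / 2) / Z * η θ) r') r = 0) :
    gradient η θ + (β * η θ) • v = 0 := by
  have hm : ∀ r : E, HasGradientAt (fun r => Real.exp (-β * ‖r‖ ^ 2 / 2) / Z * η θ)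
      ((-β * (Real.exp (-β * ‖r‖ ^ 2 / 2) / Z * η θ)) • r) r := by
    intro r
    convert hasGradientAt_const_mul_exp_neg_mul_norm_sq β (η θ / Z) r using 2 <;> ring
  have key : ∀ r : E,
      Real.exp (-β * ‖r‖ ^ 2 / 2) / Z * ⟪gradient η θ + (β * η θ) • v, r⟫ = 0 := by
    intro r
    have hr := h r
    rw [gradient_const_mul hη, sub_sub, vdiv_smul_const_add_smul_add_vdiv_gradient hβ hm] at hr
    rw [← hr, inner_add_left, real_inner_smul_left, real_inner_smul_left, real_inner_comm v]
    ring
  have hself := key (gradient η θ + (β * η θ) • v)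
  exact inner_self_eq_zero.mp
    ((mul_eq_zero.mp hself).resolve_left (div_ne_zero (Real.exp_ne_zero _) hZ))

end Divergence

theorem integral_exp_neg_mul_norm_sq_div_two_pos {V : Type*} [NormedAddCommGroup V]
    [InnerProductSpace ℝ V] [FiniteDimensional ℝ V] [MeasurableSpace V] [BorelSpace V]
    {β : ℝ} (hβ : 0 < β) : 0 < ∫ v : V, Real.exp (-β * ‖v‖ ^ 2 / 2) := by
  have h := GaussianFourier.integral_rexp_neg_mul_sq_norm (V := V) (half_pos hβ)
  simp only [neg_div, neg_mul, ← mul_div_right_comm] at h ⊢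
  rw [h]
  positivity

theorem stmt_1_general {d : ℕ} {F : Type*} [NormedAddCommGroup F] [InnerProductSpace ℝ F]
    (gradR : F → F)
    (Ψ : EuclideanSpace ℝ (Fin d) → F) (hΨ : Differentiable ℝ Ψ)
    (g : EuclideanSpace ℝ (Fin d) → ℝ) (hg : Differentiable ℝ g)
    (β γ : ℝ) (hβ : 0 < β)
    (η : EuclideanSpace ℝ (Fin d) → ℝ)
    (hηC1 : ContDiff ℝ 1 η) (hηint : ∫ θ, η θ = 1) :
    let Fp : EuclideanSpace ℝ (Fin d) → ℝ :=
      fun θ => ⟪gradR (∫ θ', η θ' • Ψ θ'), Ψ θ⟫ + g θ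
    let Z₁ : ℝ := ∫ r : EuclideanSpace ℝ (Fin d), Real.exp (-β * ‖r‖ ^ 2 / 2)
    let ρ : EuclideanSpace ℝ (Fin d) × EuclideanSpace ℝ (Fin d) → ℝ :=
      fun p => (Real.exp (-β * ‖p.2‖ ^ 2 / 2) / Z₁) * η p.1
    (∀ θ r : EuclideanSpace ℝ (Fin d),
        ⟪gradient (fun θ' => ρ (θ', r)) θ, r⟫
          - vdiv (fun r' => ρ (θ, r') • (gradient Fp θ + γ • r')) r
          - (γ * β⁻¹) * vdiv (fun r' => gradient (fun r'' => ρ (θ, r'')) r') r = 0) →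
      (∀ θ, gradient η θ + (β * η θ) • gradient Fp θ = 0) ∧
      (Integrable fun θ => Real.exp (-β * Fp θ)) ∧
      (∀ θ, η θ = Real.exp (-β * Fp θ) / ∫ θ', Real.exp (-β * Fp θ')) := by
  intro Fp Z₁ ρ hstat
  have hη : Differentiable ℝ η := hηC1.differentiable one_ne_zero
  have hFp : Differentiable ℝ Fp := ((differentiable_const _).inner ℝ hΨ).add hg
  have hZ₁ : Z₁ ≠ 0 := (integral_exp_neg_mul_norm_sq_div_two_pos hβ).ne'
  have hgrad : ∀ θ, gradient η θ + (β * η θ) • gradient Fp θ = 0 := fun θ =>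
    gradient_add_smul_eq_zero_of_stationary (hη θ) hβ.ne' hZ₁ (hstat θ)
  have hprop : ∀ θ, η θ = η 0 * Real.exp (β * Fp 0) * Real.exp (-β * Fp θ) := fun θ => by
    rw [← mul_exp_eq_of_gradient_add_smul_gradient_eq_zero hη hFp hgrad θ 0, mul_assoc,
      ← Real.exp_add, neg_mul, add_neg_cancel, Real.exp_zero, mul_one]
  exact ⟨hgrad, integrable_and_eq_div_integral_of_eq_const_mul hprop hηint⟩

/-- second part of Theorem 4.1: if `η` is an everywhere positive C¹
probability density on `ℝ^d` such that the product density
`ρ(θ,r) = (exp(−β|r|²/2)/Z₁) η(θ)` satisfies the stationary kinetic Fokker–Planck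
equation `⟨∇_θρ, r⟩ − ∇_r·[ρ(∇F'(η)(θ) + γr)] − γβ⁻¹ Δ_r ρ = 0` pointwise, then
`∇η + βη∇F'(η) = 0` everywhere; consequently `exp(−βF'(η))` is integrable and `η`
solves the Boltzmann fixed point equation `η = exp(−βF'(η))/Z₂(η)`.
Here `F'(η)(θ) = ⟨∇R(⟨Ψ,η⟩), Ψ(θ)⟩_ℱ + g(θ)`. -/
theorem stmt_1 {d : ℕ} {F : Type*} [NormedAddCommGroup F] [InnerProductSpace ℝ F]
    [CompleteSpace F]
    (R : F → ℝ) (hR0 : ∀ ψ, 0 ≤ R ψ) (hRconv : ConvexOn ℝ Set.univ R)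
    (gradR : F → F) (hgradR : ∀ ψ, HasGradientAt R (gradR ψ) ψ)
    (Ψ : EuclideanSpace ℝ (Fin d) → F) (hΨ : Differentiable ℝ Ψ)
    (g : EuclideanSpace ℝ (Fin d) → ℝ) (hg0 : ∀ θ, 0 ≤ g θ) (hg : Differentiable ℝ g)
    (β γ : ℝ) (hβ : 0 < β) (hγ : 0 < γ)
    (η : EuclideanSpace ℝ (Fin d) → ℝ)
    (hηpos : ∀ θ, 0 < η θ) (hηC1 : ContDiff ℝ 1 η) (hηint : ∫ θ, η θ = 1)
    (hΨη : Integrable fun θ => η θ • Ψ θ) :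
    let Fp : EuclideanSpace ℝ (Fin d) → ℝ :=
      fun θ => ⟪gradR (∫ θ', η θ' • Ψ θ'), Ψ θ⟫ + g θ
    let Z₁ : ℝ := ∫ r : EuclideanSpace ℝ (Fin d), Real.exp (-β * ‖r‖ ^ 2 / 2)
    let ρ : EuclideanSpace ℝ (Fin d) × EuclideanSpace ℝ (Fin d) → ℝ :=
      fun p => (Real.exp (-β * ‖p.2‖ ^ 2 / 2) / Z₁) * η p.1
    (∀ θ r : EuclideanSpace ℝ (Fin d),
        ⟪gradient (fun θ' => ρ (θ', r)) θ, r⟫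
          - vdiv (fun r' => ρ (θ, r') • (gradient Fp θ + γ • r')) r
          - (γ * β⁻¹) * vdiv (fun r' => gradient (fun r'' => ρ (θ, r'')) r') r = 0) →
      (∀ θ, gradient η θ + (β * η θ) • gradient Fp θ = 0) ∧
      (Integrable fun θ => Real.exp (-β * Fp θ)) ∧
      (∀ θ, η θ = Real.exp (-β * Fp θ) / ∫ θ', Real.exp (-β * Fp θ')) :=
  stmt_1_general gradR Ψ hΨ g hg β γ hβ η hηC1 hηint
end

section
/- Under assumption (A4), for every β > 0, if ρ₁ and ρ₂ are probability densities on ℝ^d each satisfying the Boltzmann fixed point equation ρᵢ(θ) = exp(−βF'(ρᵢ)(θ))/Z₂(ρᵢ) for almost every θ (i = 1, 2), then ρ₁ = ρ₂ almost everywhere. In particular the Boltzmann operator T has at most one fixed point. (Uniqueness part of Proposition 4.2; the proof uses convexity of R and the Kullback–Leibler divergence.) -/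
open MeasureTheory
open scoped RealInnerProductSpace

/-!
For a fixed point `ρ = exp (-β F'(ρ)) / Z`, `log ρ` is `-β F'(ρ)` up to an additive constant.
Hence the symmetrised Kullback–Leibler divergence `∫ (ρ₁ - ρ₂) (log ρ₁ - log ρ₂)` of two fixed
points, which is nonnegative and vanishes only if `ρ₁ = ρ₂` a.e., equals
`β ∫ (ρ₁ - ρ₂) (F'(ρ₂) - F'(ρ₁)) = -β ⟪∇R m₁ - ∇R m₂, m₁ - m₂⟫` with `mᵢ = ⟨Ψ, ρᵢ⟩`,
which is `≤ 0` because the gradient of the convex `R` is monotone.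
-/

section GradientMonotone

variable {F : Type*} [NormedAddCommGroup F] [InnerProductSpace ℝ F] [CompleteSpace F]

/-- Restricting to the segment from `y` to `x` gives a convex function of one variable whose
derivative `t ↦ ⟪∇R (lineMap y x t), x - y⟫` is monotone; compare its values at `0` and `1`. -/
theorem ConvexOn.inner_gradient_sub_gradient_nonneg {R : F → ℝ} (hR : ConvexOn ℝ Set.univ R)
    {gradR : F → F} (hgradR : ∀ ψ, HasGradientAt R (gradR ψ) ψ) (x y : F) :
    0 ≤ ⟪gradR x - gradR y, x - y⟫ := by
  let c : ℝ →ᵃ[ℝ] F := AffineMap.lineMap y x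
  have hderiv (t : ℝ) : HasDerivAt (R ∘ c) ⟪gradR (c t), x - y⟫ t :=
    (hgradR (c t)).hasFDerivAt.comp_hasDerivAt t AffineMap.hasDerivAt_lineMap
  have hconv : ConvexOn ℝ Set.univ (R ∘ c) := by simpa using hR.comp_affineMap c
  have hmono := hconv.monotoneOn_deriv fun t _ => (hderiv t).differentiableAt
  have h01 := hmono (Set.mem_univ 0) (Set.mem_univ 1) zero_le_one
  rw [(hderiv 0).deriv, (hderiv 1).deriv] at h01
  simp only [c, AffineMap.lineMap_apply_zero, AffineMap.lineMap_apply_one] at h01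
  rw [inner_sub_left]
  linarith

end GradientMonotone

theorem MonotoneOn.mul_sub_sub_nonneg {f : ℝ → ℝ} {s : Set ℝ} (hf : MonotoneOn f s) {x y : ℝ}
    (hx : x ∈ s) (hy : y ∈ s) : 0 ≤ (x - y) * (f x - f y) := by
  rcases le_total x y with hxy | hyx
  · exact mul_nonneg_of_nonpos_of_nonpos (sub_nonpos.2 hxy) (sub_nonpos.2 (hf hx hy hxy))
  · exact mul_nonneg (sub_nonneg.2 hyx) (sub_nonneg.2 (hf hy hx hyx))

theorem Set.InjOn.eq_of_mul_sub_sub_eq_zero {f : ℝ → ℝ} {s : Set ℝ} (hf : s.InjOn f) {x y : ℝ}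
    (hx : x ∈ s) (hy : y ∈ s) (h : (x - y) * (f x - f y) = 0) : x = y := by
  rcases mul_eq_zero.1 h with h | h
  · exact sub_eq_zero.1 h
  · exact hf hx hy (sub_eq_zero.1 h)

section Boltzmann

variable {α : Type*} [MeasurableSpace α] {μ : Measure α}

open Real

theorem ae_eq_of_integral_mul_log_sub_nonpos {ρ₁ ρ₂ : α → ℝ}
    (h₁ : ∀ᵐ x ∂μ, 0 < ρ₁ x) (h₂ : ∀ᵐ x ∂μ, 0 < ρ₂ x)
    (hint : Integrable (fun x => (ρ₁ x - ρ₂ x) * (log (ρ₁ x) - log (ρ₂ x))) μ)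
    (hle : ∫ x, (ρ₁ x - ρ₂ x) * (log (ρ₁ x) - log (ρ₂ x)) ∂μ ≤ 0) :
    ρ₁ =ᵐ[μ] ρ₂ := by
  have hnonneg : 0 ≤ᵐ[μ] fun x => (ρ₁ x - ρ₂ x) * (log (ρ₁ x) - log (ρ₂ x)) := by
    filter_upwards [h₁, h₂] with x hx₁ hx₂
    exact strictMonoOn_log.monotoneOn.mul_sub_sub_nonneg hx₁ hx₂
  have hzero := (integral_eq_zero_iff_of_nonneg_ae hnonneg hint).1
    (le_antisymm hle (integral_nonneg_of_ae hnonneg))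
  filter_upwards [h₁, h₂, hzero] with x hx₁ hx₂ hx
  exact strictMonoOn_log.injOn.eq_of_mul_sub_sub_eq_zero hx₁ hx₂ hx

/-- `boltzmannDensity volume β (F' ρ)` is the Boltzmann operator `T(ρ)`. -/
noncomputable def boltzmannDensity (μ : Measure α) (β : ℝ) (V : α → ℝ) (x : α) : ℝ :=
  exp (-β * V x) / ∫ y, exp (-β * V y) ∂μ

/-- If `Z = 0`, the junk value `exp (-β V) / 0 = 0` makes `boltzmannDensity` vanish. -/
theorem integral_exp_pos_of_ae_eq_boltzmannDensity {ρ V : α → ℝ} {β : ℝ}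
    (hρ : ∫ x, ρ x ∂μ ≠ 0) (hfix : ρ =ᵐ[μ] boltzmannDensity μ β V) :
    0 < ∫ x, exp (-β * V x) ∂μ := by
  refine (integral_nonneg fun x => (exp_pos _).le).lt_of_ne fun hZ => hρ ?_
  have hzero : boltzmannDensity μ β V = 0 := by
    ext x
    rw [boltzmannDensity, ← hZ, div_zero, Pi.zero_apply]
  rw [integral_congr_ae hfix, hzero, Pi.zero_def, integral_zero]

theorem boltzmannDensity_pos {V : α → ℝ} {β : ℝ} (hZ : 0 < ∫ x, exp (-β * V x) ∂μ) (x : α) :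
    0 < boltzmannDensity μ β V x :=
  div_pos (exp_pos _) hZ

theorem log_boltzmannDensity {V : α → ℝ} {β : ℝ} (hZ : 0 < ∫ x, exp (-β * V x) ∂μ) (x : α) :
    log (boltzmannDensity μ β V x) = -β * V x - log (∫ x, exp (-β * V x) ∂μ) := by
  rw [boltzmannDensity, log_div (exp_ne_zero _) hZ.ne', log_exp]

/-- The partition functions contribute `log (Z₂ / Z₁) ∫ (ρ₁ - ρ₂) = 0` to the divergence. -/
theorem ae_eq_of_ae_eq_boltzmannDensity {ρ₁ ρ₂ V₁ V₂ : α → ℝ} {β : ℝ} (hβ : 0 ≤ β)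
    (h₁int : Integrable ρ₁ μ) (h₁1 : ∫ x, ρ₁ x ∂μ = 1)
    (h₂int : Integrable ρ₂ μ) (h₂1 : ∫ x, ρ₂ x ∂μ = 1)
    (hfix₁ : ρ₁ =ᵐ[μ] boltzmannDensity μ β V₁) (hfix₂ : ρ₂ =ᵐ[μ] boltzmannDensity μ β V₂)
    (hcross_int : Integrable (fun x => (ρ₁ x - ρ₂ x) * (V₂ x - V₁ x)) μ)
    (hcross : ∫ x, (ρ₁ x - ρ₂ x) * (V₂ x - V₁ x) ∂μ ≤ 0) :
    ρ₁ =ᵐ[μ] ρ₂ := by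
  have hZ₁ := integral_exp_pos_of_ae_eq_boltzmannDensity (by rw [h₁1]; exact one_ne_zero) hfix₁
  have hZ₂ := integral_exp_pos_of_ae_eq_boltzmannDensity (by rw [h₂1]; exact one_ne_zero) hfix₂
  set K := log (∫ x, exp (-β * V₂ x) ∂μ) - log (∫ x, exp (-β * V₁ x) ∂μ)
  have hdiff_int : Integrable (fun x => ρ₁ x - ρ₂ x) μ := h₁int.sub h₂int
  have hKL : (fun x => (ρ₁ x - ρ₂ x) * (log (ρ₁ x) - log (ρ₂ x))) =ᵐ[μ]
      fun x => β * ((ρ₁ x - ρ₂ x) * (V₂ x - V₁ x)) + K * (ρ₁ x - ρ₂ x) := by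
    filter_upwards [hfix₁, hfix₂] with x hx₁ hx₂
    rw [hx₁, hx₂, log_boltzmannDensity hZ₁, log_boltzmannDensity hZ₂]
    ring
  have hKL_int := (hcross_int.const_mul β).add (hdiff_int.const_mul K)
  refine ae_eq_of_integral_mul_log_sub_nonpos
    (hfix₁.mono fun x hx => hx ▸ boltzmannDensity_pos hZ₁ x)
    (hfix₂.mono fun x hx => hx ▸ boltzmannDensity_pos hZ₂ x)
    (hKL_int.congr hKL.symm) ?_
  rw [integral_congr_ae hKL, integral_add (hcross_int.const_mul β) (hdiff_int.const_mul K),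
    integral_const_mul, integral_const_mul, integral_sub h₁int h₂int, h₁1, h₂1, sub_self,
    mul_zero, add_zero]
  exact mul_nonpos_of_nonneg_of_nonpos hβ hcross

end Boltzmann

theorem stmt_3_general {d : ℕ} {F : Type*} [NormedAddCommGroup F] [InnerProductSpace ℝ F]
    [CompleteSpace F]
    (R : F → ℝ) (hRconv : ConvexOn ℝ Set.univ R)
    (gradR : F → F) (hgradR : ∀ ψ, HasGradientAt R (gradR ψ) ψ)
    (Ψ : EuclideanSpace ℝ (Fin d) → F)
    (g : EuclideanSpace ℝ (Fin d) → ℝ)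
    (hA4int : ∀ ρ : EuclideanSpace ℝ (Fin d) → ℝ,
      Integrable ρ → 0 ≤ ρ → (∫ θ, ρ θ) ≤ 1 → Integrable fun θ => ρ θ • Ψ θ)
    (β : ℝ) (hβ : 0 < β)
    (ρ₁ ρ₂ : EuclideanSpace ℝ (Fin d) → ℝ)
    (h₁0 : 0 ≤ ρ₁) (h₁int : Integrable ρ₁) (h₁1 : (∫ θ, ρ₁ θ) = 1)
    (h₂0 : 0 ≤ ρ₂) (h₂int : Integrable ρ₂) (h₂1 : (∫ θ, ρ₂ θ) = 1)
    (hfix₁ : ∀ᵐ θ ∂(volume : Measure (EuclideanSpace ℝ (Fin d))),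
      ρ₁ θ = Real.exp (-β * (⟪gradR (∫ t, ρ₁ t • Ψ t), Ψ θ⟫ + g θ)) /
        ∫ θ', Real.exp (-β * (⟪gradR (∫ t, ρ₁ t • Ψ t), Ψ θ'⟫ + g θ')))
    (hfix₂ : ∀ᵐ θ ∂(volume : Measure (EuclideanSpace ℝ (Fin d))),
      ρ₂ θ = Real.exp (-β * (⟪gradR (∫ t, ρ₂ t • Ψ t), Ψ θ⟫ + g θ)) /
        ∫ θ', Real.exp (-β * (⟪gradR (∫ t, ρ₂ t • Ψ t), Ψ θ'⟫ + g θ'))) :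
    ρ₁ =ᵐ[(volume : Measure (EuclideanSpace ℝ (Fin d)))] ρ₂ := by
  set m₁ := ∫ t, ρ₁ t • Ψ t
  set m₂ := ∫ t, ρ₂ t • Ψ t
  have hΨ₁ : Integrable fun θ => ρ₁ θ • Ψ θ := hA4int ρ₁ h₁int h₁0 h₁1.le
  have hΨ₂ : Integrable fun θ => ρ₂ θ • Ψ θ := hA4int ρ₂ h₂int h₂0 h₂1.le
  have hdiff_int : Integrable fun θ => (ρ₁ θ - ρ₂ θ) • Ψ θ := by
    simpa only [sub_smul, Pi.sub_def] using hΨ₁.sub hΨ₂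
  have hdiff : ∫ θ, (ρ₁ θ - ρ₂ θ) • Ψ θ = m₁ - m₂ := by
    simpa only [sub_smul] using integral_sub hΨ₁ hΨ₂
  have hcross : (fun θ => (ρ₁ θ - ρ₂ θ) *
        ((⟪gradR m₂, Ψ θ⟫ + g θ) - (⟪gradR m₁, Ψ θ⟫ + g θ))) =
      fun θ => ⟪gradR m₂ - gradR m₁, (ρ₁ θ - ρ₂ θ) • Ψ θ⟫ := by
    funext θ
    rw [real_inner_smul_right, inner_sub_left]
    ring
  refine ae_eq_of_ae_eq_boltzmannDensity hβ.le h₁int h₁1 h₂int h₂1 hfix₁ hfix₂ ?_ ?_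
  · rw [hcross]
    exact hdiff_int.const_inner _
  · rw [hcross, integral_inner hdiff_int, hdiff, ← neg_sub (gradR m₁), inner_neg_left,
      neg_nonpos]
    exact hRconv.inner_gradient_sub_gradient_nonneg hgradR m₁ m₂

/-- uniqueness part of Proposition 4.2: under assumption (A4), for every
`β > 0`, if `ρ₁` and `ρ₂` are probability densities on `ℝ^d` each satisfying the
Boltzmann fixed point equation `ρᵢ(θ) = exp(−βF'(ρᵢ)(θ))/Z₂(ρᵢ)` for a.e. `θ`, then
`ρ₁ = ρ₂` almost everywhere; in particular the Boltzmann operator has at most one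
fixed point.  Here `F'(ρ)(θ) = ⟨∇R(⟨Ψ,ρ⟩), Ψ(θ)⟩_ℱ + g(θ)`. -/
theorem stmt_3 {d : ℕ} {F : Type*} [NormedAddCommGroup F] [InnerProductSpace ℝ F]
    [CompleteSpace F]
    (R : F → ℝ) (hR0 : ∀ ψ, 0 ≤ R ψ) (hRconv : ConvexOn ℝ Set.univ R)
    (gradR : F → F) (hgradR : ∀ ψ, HasGradientAt R (gradR ψ) ψ)
    (Ψ : EuclideanSpace ℝ (Fin d) → F)
    (g : EuclideanSpace ℝ (Fin d) → ℝ) (hg0 : ∀ θ, 0 ≤ g θ)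
    (hA4int : ∀ ρ : EuclideanSpace ℝ (Fin d) → ℝ,
      Integrable ρ → 0 ≤ ρ → (∫ θ, ρ θ) ≤ 1 → Integrable fun θ => ρ θ • Ψ θ)
    (M₀ : ℝ)
    (hA4bdd : ∀ ρ : EuclideanSpace ℝ (Fin d) → ℝ,
      Integrable ρ → 0 ≤ ρ → (∫ θ, ρ θ) ≤ 1 →
        ∀ θ, |⟪gradR (∫ t, ρ t • Ψ t), Ψ θ⟫| ≤ M₀)
    (hA4equi : ∀ ε : ℝ, 0 < ε → ∃ δ : ℝ, 0 < δ ∧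
      ∀ ρ : EuclideanSpace ℝ (Fin d) → ℝ,
        Integrable ρ → 0 ≤ ρ → (∫ θ, ρ θ) ≤ 1 →
          ∀ θ θ' : EuclideanSpace ℝ (Fin d), dist θ θ' < δ →
            |⟪gradR (∫ t, ρ t • Ψ t), Ψ θ⟫ - ⟪gradR (∫ t, ρ t • Ψ t), Ψ θ'⟫| < ε)
    (hgdiff : Differentiable ℝ g)
    (hgconf : Filter.Tendsto g (Filter.cocompact (EuclideanSpace ℝ (Fin d))) Filter.atTop)
    (hgexp : ∀ b : ℝ, 0 < b → Integrable fun θ => Real.exp (-b * g θ))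
    (β : ℝ) (hβ : 0 < β)
    (ρ₁ ρ₂ : EuclideanSpace ℝ (Fin d) → ℝ)
    (h₁meas : Measurable ρ₁) (h₁0 : 0 ≤ ρ₁) (h₁int : Integrable ρ₁) (h₁1 : (∫ θ, ρ₁ θ) = 1)
    (h₂meas : Measurable ρ₂) (h₂0 : 0 ≤ ρ₂) (h₂int : Integrable ρ₂) (h₂1 : (∫ θ, ρ₂ θ) = 1)
    (hfix₁ : ∀ᵐ θ ∂(volume : Measure (EuclideanSpace ℝ (Fin d))),
      ρ₁ θ = Real.exp (-β * (⟪gradR (∫ t, ρ₁ t • Ψ t), Ψ θ⟫ + g θ)) /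
        ∫ θ', Real.exp (-β * (⟪gradR (∫ t, ρ₁ t • Ψ t), Ψ θ'⟫ + g θ')))
    (hfix₂ : ∀ᵐ θ ∂(volume : Measure (EuclideanSpace ℝ (Fin d))),
      ρ₂ θ = Real.exp (-β * (⟪gradR (∫ t, ρ₂ t • Ψ t), Ψ θ⟫ + g θ)) /
        ∫ θ', Real.exp (-β * (⟪gradR (∫ t, ρ₂ t • Ψ t), Ψ θ'⟫ + g θ'))) :
    ρ₁ =ᵐ[(volume : Measure (EuclideanSpace ℝ (Fin d)))] ρ₂ :=
  stmt_3_general R hRconv gradR hgradR Ψ g hA4int β hβ ρ₁ ρ₂ h₁0 h₁int h₁1 h₂0 h₂int h₂1 hfix₁ hfix₂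
end

section
/- Let d ≥ 1 and β, γ > 0. Let ρ be an everywhere positive, continuously differentiable probability density on ℝ^d × ℝ^d (variables (θ,r)) such that the functions (θ,r) ↦ |r|²ρ(θ,r), (θ,r) ↦ (1+|r|)|∇ρ(θ,r)|, and (θ,r) ↦ |∇_rρ(θ,r)|²/ρ(θ,r) are Lebesgue integrable, and let u : ℝ^d → ℝ^d be bounded and measurable (in the paper, u = ∇_θF'([ρ]^θ), which is bounded by assumption (A3)). Then ∫∫⟨∇_θρ(θ,r), r⟩ dθdr = 0 and ∫∫⟨∇_rρ(θ,r), u(θ)⟩ dθdr = 0, and consequently the free-energy dissipation identity holds: ∫∫ [ ⟨u(θ) + β⁻¹∇_θ log ρ(θ,r), r⟩ + ⟨r + β⁻¹∇_r log ρ(θ,r), −u(θ) − γr − γβ⁻¹∇_r log ρ(θ,r)⟩ ] ρ(θ,r) dθdr = −γ ∫∫ |r + β⁻¹∇_r log ρ(θ,r)|² ρ(θ,r) dθdr. (Static form of Proposition 3.2: the derivative of the free energy along the noisy heavy ball dynamics equals minus γ times the kinetic dissipation.) -/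
/-!
Both boundary terms vanish by Fubini: for fixed `r` (resp. fixed `θ`) the inner integrand is a
directional derivative of an integrable function with integrable derivative, whose integral is
zero by integration by parts against the constant `1`. Since `ρ ∇ log ρ = ∇ρ`, the integrand of
the dissipation identity is pointwise
`β⁻¹ ⟨∇_θ ρ, r⟩ - β⁻¹ ⟨∇_r ρ, u⟩ - γ |r + β⁻¹ ∇_r log ρ|² ρ`, and the first two terms integrate
to zero.
-/

open MeasureTheory InnerProductSpace
open scoped RealInnerProductSpace

section IntegrationByParts

variable {E X : Type*} [NormedAddCommGroup E] [InnerProductSpace ℝ E] [FiniteDimensional ℝ E]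
  [MeasurableSpace E] [BorelSpace E] {μ : Measure E} [μ.IsAddHaarMeasure]
  [MeasurableSpace X] {ν : Measure X} [SFinite ν]

theorem integral_inner_gradient_eq_zero {g : E → ℝ} (v : E) (hg : Differentiable ℝ g)
    (hgi : Integrable g μ) (hg'i : Integrable (fun x => ⟪gradient g x, v⟫) μ) :
    ∫ x, ⟪gradient g x, v⟫ ∂μ = 0 := by
  simp_rw [inner_gradient_left] at hg'i ⊢
  simpa using integral_mul_fderiv_eq_neg_fderiv_mul_of_integrable (f := fun _ => (1 : ℝ))
    (v := v) (by simp) (by simpa using hg'i) (by simpa using hgi)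
    (fun x _ => differentiableAt_const _) (fun x _ => hg x)

theorem integral_inner_gradient_left_eq_zero {ρ : E × X → ℝ}
    (hρ : ∀ y, Differentiable ℝ fun x => ρ (x, y)) (hρi : Integrable ρ (μ.prod ν)) {w : X → E}
    (hi : Integrable (fun p => ⟪gradient (fun x => ρ (x, p.2)) p.1, w p.2⟫) (μ.prod ν)) :
    ∫ p, ⟪gradient (fun x => ρ (x, p.2)) p.1, w p.2⟫ ∂μ.prod ν = 0 := by
  rw [integral_prod_symm _ hi]
  refine integral_eq_zero_of_ae ?_
  filter_upwards [hi.prod_left_ae, hρi.prod_left_ae] with y hiy hρy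
  exact integral_inner_gradient_eq_zero _ (hρ y) hρy hiy

theorem integral_inner_gradient_right_eq_zero {ρ : X × E → ℝ}
    (hρ : ∀ x, Differentiable ℝ fun y => ρ (x, y)) (hρi : Integrable ρ (ν.prod μ)) {w : X → E}
    (hi : Integrable (fun p => ⟪gradient (fun y => ρ (p.1, y)) p.2, w p.1⟫) (ν.prod μ)) :
    ∫ p, ⟪gradient (fun y => ρ (p.1, y)) p.2, w p.1⟫ ∂ν.prod μ = 0 := by
  rw [integral_prod _ hi]
  refine integral_eq_zero_of_ae ?_
  filter_upwards [hi.prod_right_ae, hρi.prod_right_ae] with x hix hρx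
  exact integral_inner_gradient_eq_zero _ (hρ x) hρx hix

end IntegrationByParts

theorem gradient_log {E : Type*} [NormedAddCommGroup E] [InnerProductSpace ℝ E] [CompleteSpace E]
    {f : E → ℝ} {x : E} (hf : DifferentiableAt ℝ f x) (hx : f x ≠ 0) :
    gradient (fun y => Real.log (f y)) x = (f x)⁻¹ • gradient f x := by
  rw [gradient, (hf.hasFDerivAt.log hx).fderiv, map_smul, gradient]

section PartialGradientLeft

variable {E F : Type*} [NormedAddCommGroup E] [InnerProductSpace ℝ E] [CompleteSpace E]
  [NormedAddCommGroup F] [NormedSpace ℝ F] {ρ : E × F → ℝ}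

theorem gradient_partial_left_eq {x : E} {y : F} (hρ : DifferentiableAt ℝ ρ (x, y)) :
    gradient (fun x' => ρ (x', y)) x
      = (toDual ℝ E).symm ((fderiv ℝ ρ (x, y)).comp (.inl ℝ E F)) := by
  have h : HasFDerivAt (fun x' => ρ (x', y)) _ x :=
    hρ.hasFDerivAt.comp x (hasFDerivAt_prodMk_left x y)
  rw [gradient, h.fderiv]

theorem continuous_gradient_partial_left (hρ : ContDiff ℝ 1 ρ) :
    Continuous fun p : E × F => gradient (fun x => ρ (x, p.2)) p.1 := by
  simp_rw [gradient_partial_left_eq (hρ.differentiable one_ne_zero _)]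
  exact (toDual ℝ E).symm.continuous.comp
    ((hρ.continuous_fderiv one_ne_zero).clm_comp continuous_const)

theorem abs_inner_gradient_partial_left_le {x : E} {y : F} (hρ : DifferentiableAt ℝ ρ (x, y))
    (v : E) : |⟪gradient (fun x' => ρ (x', y)) x, v⟫| ≤ ‖v‖ * ‖fderiv ℝ ρ (x, y)‖ := by
  rw [gradient_partial_left_eq hρ, toDual_symm_apply, mul_comm]
  simpa using (fderiv ℝ ρ (x, y)).le_opNorm (v, 0)

end PartialGradientLeft

section PartialGradientRight

variable {E F : Type*} [NormedAddCommGroup E] [NormedSpace ℝ E]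
  [NormedAddCommGroup F] [InnerProductSpace ℝ F] [CompleteSpace F] {ρ : E × F → ℝ}

theorem gradient_partial_right_eq {x : E} {y : F} (hρ : DifferentiableAt ℝ ρ (x, y)) :
    gradient (fun y' => ρ (x, y')) y
      = (toDual ℝ F).symm ((fderiv ℝ ρ (x, y)).comp (.inr ℝ E F)) := by
  have h : HasFDerivAt (fun y' => ρ (x, y')) _ y :=
    hρ.hasFDerivAt.comp y (hasFDerivAt_prodMk_right x y)
  rw [gradient, h.fderiv]

theorem continuous_gradient_partial_right (hρ : ContDiff ℝ 1 ρ) :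
    Continuous fun p : E × F => gradient (fun y => ρ (p.1, y)) p.2 := by
  simp_rw [gradient_partial_right_eq (hρ.differentiable one_ne_zero _)]
  exact (toDual ℝ F).symm.continuous.comp
    ((hρ.continuous_fderiv one_ne_zero).clm_comp continuous_const)

theorem abs_inner_gradient_partial_right_le {x : E} {y : F} (hρ : DifferentiableAt ℝ ρ (x, y))
    (v : F) : |⟪gradient (fun y' => ρ (x, y')) y, v⟫| ≤ ‖v‖ * ‖fderiv ℝ ρ (x, y)‖ := by
  rw [gradient_partial_right_eq hρ, toDual_symm_apply, mul_comm]
  simpa using (fderiv ℝ ρ (x, y)).le_opNorm (0, v)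

end PartialGradientRight

section Integrability

variable {E : Type*} [NormedAddCommGroup E] [InnerProductSpace ℝ E] [FiniteDimensional ℝ E]
  [MeasurableSpace E] [BorelSpace E] {μ : Measure (E × E)} {ρ g : E × E → ℝ}

theorem integrable_inner_gradient_partial_left (hρ : ContDiff ℝ 1 ρ) {w : E × E → E}
    (hw : AEStronglyMeasurable w μ) (hg : Integrable g μ)
    (hwg : ∀ p, ‖w p‖ * ‖fderiv ℝ ρ p‖ ≤ g p) :
    Integrable (fun p => ⟪gradient (fun x => ρ (x, p.2)) p.1, w p⟫) μ :=
  hg.mono' ((continuous_gradient_partial_left hρ).aestronglyMeasurable.inner hw)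
    (.of_forall fun p =>
      (abs_inner_gradient_partial_left_le (hρ.differentiable one_ne_zero p) _).trans (hwg p))

theorem integrable_inner_gradient_partial_right (hρ : ContDiff ℝ 1 ρ) {w : E × E → E}
    (hw : AEStronglyMeasurable w μ) (hg : Integrable g μ)
    (hwg : ∀ p, ‖w p‖ * ‖fderiv ℝ ρ p‖ ≤ g p) :
    Integrable (fun p => ⟪gradient (fun y => ρ (p.1, y)) p.2, w p⟫) μ :=
  hg.mono' ((continuous_gradient_partial_right hρ).aestronglyMeasurable.inner hw)
    (.of_forall fun p =>
      (abs_inner_gradient_partial_right_le (hρ.differentiable one_ne_zero p) _).trans (hwg p))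

end Integrability

theorem integrable_norm_add_smul_sq_mul {X E : Type*} [MeasurableSpace X] [NormedAddCommGroup E]
    [NormedSpace ℝ E] {μ : Measure X} {a b : X → E} {t : X → ℝ} (c : ℝ)
    (ha : AEStronglyMeasurable a μ) (hb : AEStronglyMeasurable b μ)
    (ht : AEStronglyMeasurable t μ) (ht0 : ∀ x, 0 ≤ t x)
    (hat : Integrable (fun x => ‖a x‖ ^ 2 * t x) μ)
    (hbt : Integrable (fun x => ‖b x‖ ^ 2 * t x) μ) :
    Integrable (fun x => ‖a x + c • b x‖ ^ 2 * t x) μ := by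
  refine ((hat.const_mul 2).add (hbt.const_mul (2 * c ^ 2))).mono'
    (((ha.add (hb.const_smul c)).norm.pow 2).mul ht) (.of_forall fun x => ?_)
  have hnorm : ‖a x + c • b x‖ ≤ ‖a x‖ + |c| * ‖b x‖ := by
    simpa [norm_smul] using norm_add_le (a x) (c • b x)
  have hsq : ‖a x + c • b x‖ ^ 2 ≤ 2 * ‖a x‖ ^ 2 + 2 * c ^ 2 * ‖b x‖ ^ 2 := by
    calc ‖a x + c • b x‖ ^ 2 ≤ (‖a x‖ + |c| * ‖b x‖) ^ 2 := by gcongr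
      _ ≤ 2 * (‖a x‖ ^ 2 + (|c| * ‖b x‖) ^ 2) := add_sq_le
      _ = 2 * ‖a x‖ ^ 2 + 2 * c ^ 2 * ‖b x‖ ^ 2 := by rw [mul_pow, sq_abs]; ring
  have ht0x := ht0 x
  rw [Real.norm_of_nonneg (by positivity)]
  calc ‖a x + c • b x‖ ^ 2 * t x ≤ (2 * ‖a x‖ ^ 2 + 2 * c ^ 2 * ‖b x‖ ^ 2) * t x := by gcongr
    _ = _ := by simp only [Pi.add_apply]; ring

theorem sq_norm_gradient_log_mul {E : Type*} [NormedAddCommGroup E] [InnerProductSpace ℝ E]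
    [CompleteSpace E] {f : E → ℝ} {x : E} (hf : DifferentiableAt ℝ f x) (hx : f x ≠ 0) :
    ‖gradient (fun y => Real.log (f y)) x‖ ^ 2 * f x = ‖gradient f x‖ ^ 2 / f x := by
  rw [gradient_log hf hx, norm_smul, mul_pow, norm_inv, Real.norm_eq_abs, inv_pow, sq_abs]
  field_simp

theorem dissipation_integrand_eq {E : Type*} [NormedAddCommGroup E] [InnerProductSpace ℝ E]
    [CompleteSpace E] {ρ : E × E → ℝ} {p : E × E} (hρ : DifferentiableAt ℝ ρ p) (hp : ρ p ≠ 0)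
    (β γ : ℝ) (w : E) :
    (⟪w + β⁻¹ • gradient (fun θ => Real.log (ρ (θ, p.2))) p.1, p.2⟫
      + ⟪p.2 + β⁻¹ • gradient (fun r => Real.log (ρ (p.1, r))) p.2,
          -w - γ • p.2 - (γ * β⁻¹) • gradient (fun r => Real.log (ρ (p.1, r))) p.2⟫) * ρ p
    = β⁻¹ * ⟪gradient (fun θ => ρ (θ, p.2)) p.1, p.2⟫
      - β⁻¹ * ⟪gradient (fun r => ρ (p.1, r)) p.2, w⟫
      - γ * (‖p.2 + β⁻¹ • gradient (fun r => Real.log (ρ (p.1, r))) p.2‖ ^ 2 * ρ p) := by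
  obtain ⟨x, y⟩ := p
  have hθ : gradient (fun θ => ρ (θ, y)) x
      = ρ (x, y) • gradient (fun θ => Real.log (ρ (θ, y))) x := by
    have hd : DifferentiableAt ℝ (fun θ => ρ (θ, y)) x := hρ.comp x (by fun_prop)
    rw [gradient_log hd hp, smul_inv_smul₀ hp]
  have hr : gradient (fun r => ρ (x, r)) y
      = ρ (x, y) • gradient (fun r => Real.log (ρ (x, r))) y := by
    have hd : DifferentiableAt ℝ (fun r => ρ (x, r)) y := hρ.comp y (by fun_prop)
    rw [gradient_log hd hp, smul_inv_smul₀ hp]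
  dsimp only
  rw [hθ, hr, ← real_inner_self_eq_norm_sq]
  simp only [inner_add_left, inner_add_right, inner_sub_right, inner_neg_right,
    real_inner_smul_left, real_inner_smul_right, real_inner_comm y]
  ring

theorem stmt_5_general {d : ℕ} (β γ : ℝ)
    (ρ : EuclideanSpace ℝ (Fin d) × EuclideanSpace ℝ (Fin d) → ℝ)
    (hρpos : ∀ p, 0 < ρ p) (hρC1 : ContDiff ℝ 1 ρ)
    (hρint : ∫ p, ρ p = 1)
    (hint1 : Integrable fun p : EuclideanSpace ℝ (Fin d) × EuclideanSpace ℝ (Fin d) =>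
      ‖p.2‖ ^ 2 * ρ p)
    (hint2 : Integrable fun p : EuclideanSpace ℝ (Fin d) × EuclideanSpace ℝ (Fin d) =>
      (1 + ‖p.2‖) * ‖fderiv ℝ ρ p‖)
    (hint3 : Integrable fun p : EuclideanSpace ℝ (Fin d) × EuclideanSpace ℝ (Fin d) =>
      ‖gradient (fun r => ρ (p.1, r)) p.2‖ ^ 2 / ρ p)
    (u : EuclideanSpace ℝ (Fin d) → EuclideanSpace ℝ (Fin d))
    (humeas : Measurable u) (M : ℝ) (hubdd : ∀ θ, ‖u θ‖ ≤ M) :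
    (∫ p : EuclideanSpace ℝ (Fin d) × EuclideanSpace ℝ (Fin d),
        ⟪gradient (fun θ => ρ (θ, p.2)) p.1, p.2⟫ = 0) ∧
    (∫ p : EuclideanSpace ℝ (Fin d) × EuclideanSpace ℝ (Fin d),
        ⟪gradient (fun r => ρ (p.1, r)) p.2, u p.1⟫ = 0) ∧
    (∫ p : EuclideanSpace ℝ (Fin d) × EuclideanSpace ℝ (Fin d),
        (⟪u p.1 + β⁻¹ • gradient (fun θ => Real.log (ρ (θ, p.2))) p.1, p.2⟫
          + ⟪p.2 + β⁻¹ • gradient (fun r => Real.log (ρ (p.1, r))) p.2,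
              -u p.1 - γ • p.2
                - (γ * β⁻¹) • gradient (fun r => Real.log (ρ (p.1, r))) p.2⟫) * ρ p
      = -γ * ∫ p : EuclideanSpace ℝ (Fin d) × EuclideanSpace ℝ (Fin d),
          ‖p.2 + β⁻¹ • gradient (fun r => Real.log (ρ (p.1, r))) p.2‖ ^ 2 * ρ p) := by
  have hρd : Differentiable ℝ ρ := hρC1.differentiable one_ne_zero
  have hρi : Integrable ρ := .of_integral_ne_zero (by simp [hρint])
  have hM : 0 ≤ M := (norm_nonneg _).trans (hubdd 0)
  have hA := integrable_inner_gradient_partial_left hρC1 continuous_snd.aestronglyMeasurable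
    hint2 fun p => by gcongr; linarith [norm_nonneg p.2]
  have hB := integrable_inner_gradient_partial_right hρC1 (w := fun p => u p.1)
    (humeas.comp measurable_fst).aestronglyMeasurable (hint2.const_mul M) fun p => by
      have := mul_le_mul_of_nonneg_right (hubdd p.1) (norm_nonneg (fderiv ℝ ρ p))
      have := mul_nonneg (mul_nonneg hM (norm_nonneg p.2)) (norm_nonneg (fderiv ℝ ρ p))
      linarith
  have hlog : ContDiff ℝ 1 fun p => Real.log (ρ p) := hρC1.log fun p => (hρpos p).ne'
  have hC := integrable_norm_add_smul_sq_mul β⁻¹ continuous_snd.aestronglyMeasurable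
    (continuous_gradient_partial_right hlog).aestronglyMeasurable
    hρC1.continuous.aestronglyMeasurable (fun p => (hρpos p).le) hint1
    (hint3.congr (.of_forall fun p =>
      (sq_norm_gradient_log_mul (f := fun r => ρ (p.1, r)) (by fun_prop) (hρpos p).ne').symm))
  have h1 := integral_inner_gradient_left_eq_zero (ρ := ρ) (w := fun y => y)
    (fun y => by fun_prop) hρi hA
  have h2 := integral_inner_gradient_right_eq_zero (ρ := ρ)
    (fun x => by fun_prop) hρi hB
  rw [← Measure.volume_eq_prod] at h1 h2
  refine ⟨h1, h2, ?_⟩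
  simp_rw [dissipation_integrand_eq (hρd _) (hρpos _).ne']
  rw [integral_sub (by exact (hA.const_mul _).sub (hB.const_mul _)) (hC.const_mul _),
    integral_sub (hA.const_mul _) (hB.const_mul _), integral_const_mul, integral_const_mul,
    integral_const_mul, h1, h2]
  ring

/-- static form of Proposition 3.2: for an everywhere positive, C¹
probability density `ρ` on `ℝ^d × ℝ^d` with the stated integrability properties and a
bounded measurable vector field `u`, the two boundary terms vanish:
`∫∫ ⟨∇_θ ρ, r⟩ = 0` and `∫∫ ⟨∇_r ρ, u(θ)⟩ = 0`, and the free-energy dissipation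
identity holds:
`∫∫ [⟨u + β⁻¹∇_θ log ρ, r⟩ + ⟨r + β⁻¹∇_r log ρ, −u − γr − γβ⁻¹∇_r log ρ⟩] ρ
  = −γ ∫∫ |r + β⁻¹∇_r log ρ|² ρ`. -/
theorem stmt_5 {d : ℕ} (hd : 1 ≤ d) (β γ : ℝ) (hβ : 0 < β) (hγ : 0 < γ)
    (ρ : EuclideanSpace ℝ (Fin d) × EuclideanSpace ℝ (Fin d) → ℝ)
    (hρpos : ∀ p, 0 < ρ p) (hρC1 : ContDiff ℝ 1 ρ)
    (hρint : ∫ p, ρ p = 1)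
    (hint1 : Integrable fun p : EuclideanSpace ℝ (Fin d) × EuclideanSpace ℝ (Fin d) =>
      ‖p.2‖ ^ 2 * ρ p)
    (hint2 : Integrable fun p : EuclideanSpace ℝ (Fin d) × EuclideanSpace ℝ (Fin d) =>
      (1 + ‖p.2‖) * ‖fderiv ℝ ρ p‖)
    (hint3 : Integrable fun p : EuclideanSpace ℝ (Fin d) × EuclideanSpace ℝ (Fin d) =>
      ‖gradient (fun r => ρ (p.1, r)) p.2‖ ^ 2 / ρ p)
    (u : EuclideanSpace ℝ (Fin d) → EuclideanSpace ℝ (Fin d))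
    (humeas : Measurable u) (M : ℝ) (hubdd : ∀ θ, ‖u θ‖ ≤ M) :
    (∫ p : EuclideanSpace ℝ (Fin d) × EuclideanSpace ℝ (Fin d),
        ⟪gradient (fun θ => ρ (θ, p.2)) p.1, p.2⟫ = 0) ∧
    (∫ p : EuclideanSpace ℝ (Fin d) × EuclideanSpace ℝ (Fin d),
        ⟪gradient (fun r => ρ (p.1, r)) p.2, u p.1⟫ = 0) ∧
    (∫ p : EuclideanSpace ℝ (Fin d) × EuclideanSpace ℝ (Fin d),
        (⟪u p.1 + β⁻¹ • gradient (fun θ => Real.log (ρ (θ, p.2))) p.1, p.2⟫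
          + ⟪p.2 + β⁻¹ • gradient (fun r => Real.log (ρ (p.1, r))) p.2,
              -u p.1 - γ • p.2
                - (γ * β⁻¹) • gradient (fun r => Real.log (ρ (p.1, r))) p.2⟫) * ρ p
      = -γ * ∫ p : EuclideanSpace ℝ (Fin d) × EuclideanSpace ℝ (Fin d),
          ‖p.2 + β⁻¹ • gradient (fun r => Real.log (ρ (p.1, r))) p.2‖ ^ 2 * ρ p) :=
  stmt_5_general β γ ρ hρpos hρC1 hρint hint1 hint2 hint3 u humeas M hubdd
end

section
/- Assume R : ℱ → [0,∞) and that g : ℝ^d → [0,∞) satisfies ∫exp(−βg(θ))dθ < ∞ for every β > 0. For α > 0 let C(α) := 1 + ∫∫_{ℝ^d×ℝ^d} (1 + αg(θ) + α|r|²/2) e^{−1−αg(θ)−α|r|²/2} dθ dr, which is finite. Let β > 0 and let ρ be a probability density on ℝ^d × ℝ^d such that ∫∫(g(θ)+|r|²/2)ρ(θ,r)dθdr < ∞ and Ψ is Bochner integrable with respect to [ρ]^θ(θ)dθ; then ∫∫ρ log ρ is well-defined in (−∞,∞], E(ρ) is well-defined in (−∞,∞], and for every α with 0 < α ≤ β: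 F₀([ρ]^θ) + (1 − α/β)∫∫(g(θ)+|r|²/2)ρ dθdr + β⁻¹∫∫ρ log⁺ρ dθdr ≤ E(ρ) + C(α)/β, where log⁺x := max{log x, 0}. In particular E(ρ) ≥ F₀([ρ]^θ) + (1−α/β)∫g(θ)[ρ]^θ(θ)dθ − C(α)/β. (Proposition B.1 and the key estimate of Proposition B.2: lower bound on the free energy.) -/
open MeasureTheory Real
open scoped RealInnerProductSpace ENNReal

/-- Positive part `∫∫ ρ log⁺ ρ` of the negative entropy, valued in `[0,∞]`. -/
noncomputable def entP {d : ℕ}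
    (ρ : EuclideanSpace ℝ (Fin d) × EuclideanSpace ℝ (Fin d) → ℝ) : ℝ≥0∞ :=
  ∫⁻ p, ENNReal.ofReal (ρ p * max (Real.log (ρ p)) 0)

/-- Negative part `∫∫ ρ log⁻ ρ` of the negative entropy, valued in `[0,∞]`. -/
noncomputable def entN {d : ℕ}
    (ρ : EuclideanSpace ℝ (Fin d) × EuclideanSpace ℝ (Fin d) → ℝ) : ℝ≥0∞ :=
  ∫⁻ p, ENNReal.ofReal (ρ p * max (-Real.log (ρ p)) 0)

/-- The free energy `E(ρ) = F([ρ]^θ) + ∫∫(|r|²/2)ρ + β⁻¹∫∫ρ log ρ`, valued in `EReal`,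
where `F(η) = R(⟨Ψ,η⟩) + ∫gη` and `[ρ]^θ(θ) = ∫ρ(θ,r)dr` is the `θ`-marginal. -/
noncomputable def fEnergy {d : ℕ} {F : Type*} [NormedAddCommGroup F]
    [InnerProductSpace ℝ F] [CompleteSpace F]
    (R : F → ℝ) (Ψ : EuclideanSpace ℝ (Fin d) → F) (g : EuclideanSpace ℝ (Fin d) → ℝ)
    (β : ℝ) (ρ : EuclideanSpace ℝ (Fin d) × EuclideanSpace ℝ (Fin d) → ℝ) : EReal :=
  ((R (∫ θ, (∫ r, ρ (θ, r)) • Ψ θ) + (∫ θ, g θ * ∫ r, ρ (θ, r))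
      + ∫ p, (‖p.2‖ ^ 2 / 2) * ρ p : ℝ) : EReal)
    + ((β⁻¹ : ℝ) : EReal) * ((entP ρ : ℝ≥0∞) : EReal)
    - ((β⁻¹ : ℝ) : EReal) * ((entN ρ : ℝ≥0∞) : EReal)

/-!
The estimate rests on the Fenchel–Young type inequality `-x log x ≤ m x + e^{-1-m}`, applied
pointwise with `m = α H(θ, r)`, `H(θ, r) = g θ + |r|²/2`: integrating it against Lebesgue measure
bounds `∫∫ ρ log⁻ ρ` by `α ∫∫ H ρ + ∫∫ (1 + α H) e^{-1-α H}`, and the last integral is finite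
because `e^{-α H}` factors into `e^{-α g}` and a Gaussian in `r`. The entropy part of `E(ρ)` is
thus `β⁻¹ ∫∫ ρ log⁺ ρ` (possibly `∞`) minus a finite quantity, and the inequalities are its
rearrangement.
-/

theorem Real.neg_mul_log_le_mul_add_exp {x : ℝ} (hx : 0 ≤ x) (m : ℝ) :
    -(x * log x) ≤ m * x + exp (-1 - m) := by
  rcases hx.eq_or_lt with rfl | hx
  · simpa using (exp_pos _).le
  have h := log_le_sub_one_of_pos (div_pos (exp_pos (-1 - m)) hx)
  rw [log_div (exp_pos _).ne' hx.ne', log_exp, div_sub_one hx.ne', le_div_iff₀ hx] at h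
  linarith

theorem Real.mul_max_neg_log_le {x m : ℝ} (hx : 0 ≤ x) (hm : 0 ≤ m) :
    x * max (-log x) 0 ≤ m * x + exp (-1 - m) := by
  rw [mul_max_of_nonneg _ _ hx, mul_zero, mul_neg]
  exact max_le (neg_mul_log_le_mul_add_exp hx m) (by positivity)

theorem Real.one_add_mul_exp_neg_one_sub_le (t : ℝ) :
    (1 + t) * exp (-1 - t) ≤ 2 * exp (-(t / 2)) := by
  have hlin : 1 + t ≤ 2 * exp (t / 2) := by linarith [add_one_le_exp (t / 2)]
  calc (1 + t) * exp (-1 - t) ≤ 2 * exp (t / 2) * exp (-1 - t) := by gcongr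
    _ = 2 * exp (-1 - t / 2) := by rw [mul_assoc, ← exp_add]; ring_nf
    _ ≤ 2 * exp (-(t / 2)) := by gcongr; linarith

theorem integrable_exp_neg_mul_sq_norm {V : Type*} [NormedAddCommGroup V] [InnerProductSpace ℝ V]
    [FiniteDimensional ℝ V] [MeasurableSpace V] [BorelSpace V] {b : ℝ} (hb : 0 < b) :
    Integrable fun v : V => exp (-b * ‖v‖ ^ 2) :=
  Integrable.of_integral_ne_zero <| by
    rw [GaussianFourier.integral_rexp_neg_mul_sq_norm hb]; positivity

section Potential

variable {Ω : Type*} [MeasurableSpace Ω] {μ : Measure Ω} {U ρ : Ω → ℝ}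

theorem integrable_exp_neg_one_sub_mul {α : ℝ}
    (hexp : Integrable (fun x => exp (-α * U x)) μ) :
    Integrable (fun x => exp (-1 - α * U x)) μ :=
  (hexp.const_mul (exp (-1))).congr <| .of_forall fun x => by
    simp only [← exp_add]; ring_nf

theorem integrable_one_add_mul_mul_exp_neg_one_sub (hU0 : ∀ x, 0 ≤ U x) (hUm : Measurable U)
    {α : ℝ} (hα : 0 ≤ α) (hexp : Integrable (fun x => exp (-(α / 2) * U x)) μ) :
    Integrable (fun x => (1 + α * U x) * exp (-1 - α * U x)) μ := by
  refine (hexp.const_mul 2).mono (by fun_prop) (.of_forall fun x => ?_)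
  have hαU : 0 ≤ α * U x := mul_nonneg hα (hU0 x)
  rw [norm_of_nonneg (by positivity), norm_of_nonneg (by positivity)]
  convert one_add_mul_exp_neg_one_sub_le (α * U x) using 3
  ring

theorem integrable_mul_max_neg_log (hU0 : ∀ x, 0 ≤ U x) (hρm : Measurable ρ) (hρ0 : 0 ≤ ρ)
    (hUρ : Integrable (fun x => U x * ρ x) μ) (hexp : Integrable (fun x => exp (-U x)) μ) :
    Integrable (fun x => ρ x * max (-log (ρ x)) 0) μ := by
  have hexp1 : Integrable (fun x => exp (-1 - 1 * U x)) μ :=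
    integrable_exp_neg_one_sub_mul (by simpa using hexp)
  refine (hUρ.add hexp1).mono (by fun_prop) (.of_forall fun x => ?_)
  rw [Pi.add_apply, one_mul, norm_of_nonneg (mul_nonneg (hρ0 x) (le_max_right _ _)),
    norm_of_nonneg (add_nonneg (mul_nonneg (hU0 x) (hρ0 x)) (exp_pos _).le)]
  exact mul_max_neg_log_le (hρ0 x) (hU0 x)

theorem integral_mul_max_neg_log_le (hU0 : ∀ x, 0 ≤ U x) (hρ0 : 0 ≤ ρ)
    (hN : Integrable (fun x => ρ x * max (-log (ρ x)) 0) μ)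
    (hUρ : Integrable (fun x => U x * ρ x) μ) {α : ℝ} (hα : 0 ≤ α)
    (hexp : Integrable (fun x => exp (-1 - α * U x)) μ)
    (hC : Integrable (fun x => (1 + α * U x) * exp (-1 - α * U x)) μ) :
    ∫ x, ρ x * max (-log (ρ x)) 0 ∂μ
      ≤ α * ∫ x, U x * ρ x ∂μ + ∫ x, (1 + α * U x) * exp (-1 - α * U x) ∂μ := by
  calc ∫ x, ρ x * max (-log (ρ x)) 0 ∂μ
      ≤ ∫ x, (α * (U x * ρ x) + exp (-1 - α * U x)) ∂μ :=
        integral_mono hN ((hUρ.const_mul α).add hexp) fun x => by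
          simpa [mul_assoc] using mul_max_neg_log_le (hρ0 x) (mul_nonneg hα (hU0 x))
    _ = α * ∫ x, U x * ρ x ∂μ + ∫ x, exp (-1 - α * U x) ∂μ := by
        rw [integral_add (hUρ.const_mul α) hexp, integral_const_mul]
    _ ≤ α * ∫ x, U x * ρ x ∂μ + ∫ x, (1 + α * U x) * exp (-1 - α * U x) ∂μ := by
        refine add_le_add_right (integral_mono hexp hC fun x => ?_) _
        exact le_mul_of_one_le_left (exp_pos _).le (by linarith [mul_nonneg hα (hU0 x)])

end Potential

theorem integrable_exp_neg_mul_add_half_sq_norm {E V : Type*} [MeasureSpace E]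
    [SigmaFinite (volume : Measure E)] [NormedAddCommGroup V] [InnerProductSpace ℝ V]
    [FiniteDimensional ℝ V] [MeasurableSpace V] [BorelSpace V] {g : E → ℝ}
    (hgexp : ∀ b : ℝ, 0 < b → Integrable fun θ => exp (-b * g θ)) {c : ℝ} (hc : 0 < c) :
    Integrable fun p : E × V => exp (-c * (g p.1 + ‖p.2‖ ^ 2 / 2)) := by
  refine ((hgexp c hc).mul_prod (integrable_exp_neg_mul_sq_norm (half_pos hc))).congr
    (.of_forall fun p => ?_)
  simp only [← exp_add]
  ring_nf

theorem integral_prod_comp_fst_mul {X Y : Type*} [MeasurableSpace X] [MeasurableSpace Y]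
    {μ : Measure X} {ν : Measure Y} [SFinite μ] [SFinite ν] {f : X → ℝ} {ρ : X × Y → ℝ}
    (h : Integrable (fun p => f p.1 * ρ p) (μ.prod ν)) :
    ∫ p, f p.1 * ρ p ∂(μ.prod ν) = ∫ x, f x * ∫ y, ρ (x, y) ∂ν ∂μ := by
  simp only [integral_prod _ h, integral_const_mul]

theorem integral_add_mul_eq_integral_mul_integral_add {X Y : Type*} [MeasurableSpace X]
    [MeasurableSpace Y] {μ : Measure X} {ν : Measure Y} [SFinite μ] [SFinite ν]
    {g : X → ℝ} {f : Y → ℝ} {ρ : X × Y → ℝ} (hg0 : ∀ x, 0 ≤ g x) (hf0 : ∀ y, 0 ≤ f y)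
    (hgm : Measurable g) (hfm : Measurable f) (hρm : Measurable ρ) (hρ0 : 0 ≤ ρ)
    (h : Integrable (fun p => (g p.1 + f p.2) * ρ p) (μ.prod ν)) :
    ∫ p, (g p.1 + f p.2) * ρ p ∂(μ.prod ν)
      = ∫ x, g x * ∫ y, ρ (x, y) ∂ν ∂μ + ∫ p, f p.2 * ρ p ∂(μ.prod ν) := by
  have hle : ∀ p {a b : ℝ}, 0 ≤ a → 0 ≤ b → ‖a * ρ p‖ ≤ ‖(a + b) * ρ p‖ := fun p a b ha hb => by
    rw [norm_of_nonneg (mul_nonneg ha (hρ0 p)), norm_of_nonneg (mul_nonneg (by positivity) (hρ0 p))]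
    nlinarith [mul_nonneg hb (hρ0 p)]
  have hgρ : Integrable (fun p => g p.1 * ρ p) (μ.prod ν) :=
    h.mono (by fun_prop) (.of_forall fun p => hle p (hg0 _) (hf0 _))
  have hfρ : Integrable (fun p => f p.2 * ρ p) (μ.prod ν) :=
    h.mono (by fun_prop) (.of_forall fun p => by simpa [add_comm] using hle p (hf0 p.2) (hg0 p.1))
  rw [← integral_prod_comp_fst_mul hgρ, ← integral_add hgρ hfρ]
  simp only [add_mul]

section FreeEnergy

variable {d : ℕ} {F : Type*} [NormedAddCommGroup F] [InnerProductSpace ℝ F]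
  (R : F → ℝ) (Ψ : EuclideanSpace ℝ (Fin d) → F) (g : EuclideanSpace ℝ (Fin d) → ℝ) (β : ℝ)
  (ρ : EuclideanSpace ℝ (Fin d) × EuclideanSpace ℝ (Fin d) → ℝ)

/-- `E(ρ) - β⁻¹∫∫ρ log⁺ρ`, meaningful when `ρ log⁻ ρ` is integrable. -/
noncomputable def fEnergySubEntP : ℝ :=
  R (∫ θ, (∫ r, ρ (θ, r)) • Ψ θ) + (∫ θ, g θ * ∫ r, ρ (θ, r)) + (∫ p, ‖p.2‖ ^ 2 / 2 * ρ p)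
    - β⁻¹ * ∫ p, ρ p * max (-log (ρ p)) 0

variable {R Ψ g β ρ}

theorem fEnergy_eq_fEnergySubEntP_add [CompleteSpace F] (hρ0 : 0 ≤ ρ)
    (hN : Integrable fun p => ρ p * max (-log (ρ p)) 0) :
    fEnergy R Ψ g β ρ = (fEnergySubEntP R Ψ g β ρ : EReal) + (β⁻¹ : ℝ) * (entP ρ : EReal) := by
  have hentN : entN ρ = ENNReal.ofReal (∫ p, ρ p * max (-log (ρ p)) 0) :=
    (ofReal_integral_eq_lintegral_ofReal hN
      (.of_forall fun p => mul_nonneg (hρ0 p) (le_max_right _ _))).symm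
  rw [fEnergy, hentN, EReal.coe_ennreal_ofReal,
    max_eq_left (integral_nonneg fun p => mul_nonneg (hρ0 p) (le_max_right _ _)),
    ← EReal.coe_mul, fEnergySubEntP, EReal.coe_sub, sub_eq_add_neg, sub_eq_add_neg,
    add_right_comm]

theorem inv_mul_entP_nonneg (hβ : 0 ≤ β) : 0 ≤ ((β⁻¹ : ℝ) : EReal) * (entP ρ : EReal) :=
  mul_nonneg (EReal.coe_nonneg.2 (inv_nonneg.2 hβ)) (EReal.coe_ennreal_nonneg _)

theorem fEnergy_ne_bot [CompleteSpace F] (hβ : 0 ≤ β) (hρ0 : 0 ≤ ρ)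
    (hN : Integrable fun p => ρ p * max (-log (ρ p)) 0) : fEnergy R Ψ g β ρ ≠ ⊥ := by
  rw [fEnergy_eq_fEnergySubEntP_add hρ0 hN]
  exact EReal.add_ne_bot_iff.2
    ⟨EReal.coe_ne_bot _, ne_bot_of_le_ne_bot EReal.zero_ne_bot (inv_mul_entP_nonneg hβ)⟩

theorem coe_add_inv_mul_entP_le_fEnergy_add [CompleteSpace F] (hρ0 : 0 ≤ ρ)
    (hN : Integrable fun p => ρ p * max (-log (ρ p)) 0) {a c : ℝ}
    (h : a ≤ fEnergySubEntP R Ψ g β ρ + c) :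
    (a : EReal) + (β⁻¹ : ℝ) * (entP ρ : EReal) ≤ fEnergy R Ψ g β ρ + (c : EReal) := by
  rw [fEnergy_eq_fEnergySubEntP_add hρ0 hN, add_right_comm, ← EReal.coe_add]
  exact add_le_add_left (EReal.coe_le_coe_iff.2 h) _

theorem coe_le_fEnergy [CompleteSpace F] (hβ : 0 ≤ β) (hρ0 : 0 ≤ ρ)
    (hN : Integrable fun p => ρ p * max (-log (ρ p)) 0) {a : ℝ}
    (h : a ≤ fEnergySubEntP R Ψ g β ρ) : (a : EReal) ≤ fEnergy R Ψ g β ρ := by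
  rw [fEnergy_eq_fEnergySubEntP_add hρ0 hN]
  exact le_add_of_le_of_nonneg (EReal.coe_le_coe_iff.2 h) (inv_mul_entP_nonneg hβ)

theorem le_fEnergySubEntP_add_of_entropy_le (hβ : 0 < β) {α I : ℝ}
    (h : ∫ p, ρ p * max (-log (ρ p)) 0
      ≤ α * ((∫ θ, g θ * ∫ r, ρ (θ, r)) + ∫ p, ‖p.2‖ ^ 2 / 2 * ρ p) + I) :
    R (∫ θ, (∫ r, ρ (θ, r)) • Ψ θ)
        + (1 - α / β) * ((∫ θ, g θ * ∫ r, ρ (θ, r)) + ∫ p, ‖p.2‖ ^ 2 / 2 * ρ p)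
      ≤ fEnergySubEntP R Ψ g β ρ + (1 + I) / β := by
  have := mul_le_mul_of_nonneg_left h (inv_nonneg.2 hβ.le)
  rw [fEnergySubEntP, div_eq_mul_inv α, div_eq_mul_inv (1 + I)]
  linarith [inv_nonneg.2 hβ.le]

theorem sub_le_fEnergySubEntP_of_entropy_le (hβ : 0 < β) (hρ0 : 0 ≤ ρ) {α I : ℝ} (hαβ : α ≤ β)
    (h : ∫ p, ρ p * max (-log (ρ p)) 0
      ≤ α * ((∫ θ, g θ * ∫ r, ρ (θ, r)) + ∫ p, ‖p.2‖ ^ 2 / 2 * ρ p) + I) :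
    R (∫ θ, (∫ r, ρ (θ, r)) • Ψ θ) + (1 - α / β) * (∫ θ, g θ * ∫ r, ρ (θ, r)) - (1 + I) / β
      ≤ fEnergySubEntP R Ψ g β ρ := by
  have hαβ' : 0 ≤ 1 - α / β := sub_nonneg.2 ((div_le_one hβ).2 hαβ)
  have hK0 : 0 ≤ ∫ p, ‖p.2‖ ^ 2 / 2 * ρ p :=
    integral_nonneg fun p => mul_nonneg (by positivity) (hρ0 p)
  linarith [le_fEnergySubEntP_add_of_entropy_le (Ψ := Ψ) (R := R) hβ h, mul_nonneg hαβ' hK0]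

end FreeEnergy

theorem stmt_6_general {d : ℕ} {F : Type*} [NormedAddCommGroup F] [InnerProductSpace ℝ F]
    [CompleteSpace F]
    (R : F → ℝ)
    (Ψ : EuclideanSpace ℝ (Fin d) → F)
    (g : EuclideanSpace ℝ (Fin d) → ℝ) (hg0 : ∀ θ, 0 ≤ g θ) (hgmeas : Measurable g)
    (hgexp : ∀ b : ℝ, 0 < b → Integrable fun θ => Real.exp (-b * g θ))
    (β : ℝ) (hβ : 0 < β)
    (ρ : EuclideanSpace ℝ (Fin d) × EuclideanSpace ℝ (Fin d) → ℝ)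
    (hρmeas : Measurable ρ) (hρ0 : 0 ≤ ρ)
    (hmom : Integrable fun p : EuclideanSpace ℝ (Fin d) × EuclideanSpace ℝ (Fin d) =>
      (g p.1 + ‖p.2‖ ^ 2 / 2) * ρ p) :
    (∀ α : ℝ, 0 < α →
      Integrable fun p : EuclideanSpace ℝ (Fin d) × EuclideanSpace ℝ (Fin d) =>
        (1 + α * g p.1 + α * (‖p.2‖ ^ 2 / 2)) *
          Real.exp (-1 - α * g p.1 - α * (‖p.2‖ ^ 2 / 2))) ∧
    (Integrable fun p : EuclideanSpace ℝ (Fin d) × EuclideanSpace ℝ (Fin d) =>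
      ρ p * max (-Real.log (ρ p)) 0) ∧
    fEnergy R Ψ g β ρ ≠ ⊥ ∧
    (∀ α : ℝ, 0 < α → α ≤ β →
      ((R (∫ θ, (∫ r, ρ (θ, r)) • Ψ θ)
          + (1 - α / β) * ∫ p, (g p.1 + ‖p.2‖ ^ 2 / 2) * ρ p : ℝ) : EReal)
          + ((β⁻¹ : ℝ) : EReal) * ((entP ρ : ℝ≥0∞) : EReal)
        ≤ fEnergy R Ψ g β ρ
          + (((1 + ∫ p : EuclideanSpace ℝ (Fin d) × EuclideanSpace ℝ (Fin d),
                (1 + α * g p.1 + α * (‖p.2‖ ^ 2 / 2)) *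
                  Real.exp (-1 - α * g p.1 - α * (‖p.2‖ ^ 2 / 2))) / β : ℝ) : EReal)) ∧
    (∀ α : ℝ, 0 < α → α ≤ β →
      ((R (∫ θ, (∫ r, ρ (θ, r)) • Ψ θ)
          + (1 - α / β) * (∫ θ, g θ * ∫ r, ρ (θ, r))
          - (1 + ∫ p : EuclideanSpace ℝ (Fin d) × EuclideanSpace ℝ (Fin d),
                (1 + α * g p.1 + α * (‖p.2‖ ^ 2 / 2)) *
                  Real.exp (-1 - α * g p.1 - α * (‖p.2‖ ^ 2 / 2))) / β : ℝ) : EReal)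
        ≤ fEnergy R Ψ g β ρ) := by
  set U := fun p : EuclideanSpace ℝ (Fin d) × EuclideanSpace ℝ (Fin d) => g p.1 + ‖p.2‖ ^ 2 / 2
  have hform : ∀ α : ℝ, (fun p : EuclideanSpace ℝ (Fin d) × EuclideanSpace ℝ (Fin d) =>
      (1 + α * g p.1 + α * (‖p.2‖ ^ 2 / 2)) * exp (-1 - α * g p.1 - α * (‖p.2‖ ^ 2 / 2)))
      = fun p => (1 + α * U p) * exp (-1 - α * U p) := fun α => funext fun p => by
    simp only [U]; ring_nf
  simp only [hform]
  have hU0 : ∀ p, 0 ≤ U p := fun p => add_nonneg (hg0 p.1) (by positivity)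
  have hUexp : ∀ c, 0 < c → Integrable fun p => exp (-c * U p) :=
    fun c hc => integrable_exp_neg_mul_add_half_sq_norm hgexp hc
  have hC : ∀ α, 0 < α → Integrable fun p => (1 + α * U p) * exp (-1 - α * U p) :=
    fun α hα => integrable_one_add_mul_mul_exp_neg_one_sub hU0 (by fun_prop) hα.le
      (hUexp _ (half_pos hα))
  have hN := integrable_mul_max_neg_log hU0 hρmeas hρ0 hmom (by simpa using hUexp 1 one_pos)
  have hM := integral_add_mul_eq_integral_mul_integral_add (μ := volume) (ν := volume)
    (f := fun r => ‖r‖ ^ 2 / 2) hg0 (fun r => by positivity) hgmeas (by fun_prop) hρmeas hρ0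
    (by rwa [← Measure.volume_eq_prod])
  rw [← Measure.volume_eq_prod] at hM
  have hent : ∀ α, 0 < α → ∫ p, ρ p * max (-log (ρ p)) 0
      ≤ α * ((∫ θ, g θ * ∫ r, ρ (θ, r)) + ∫ p, ‖p.2‖ ^ 2 / 2 * ρ p)
        + ∫ p, (1 + α * U p) * exp (-1 - α * U p) := fun α hα => by
    rw [← hM]
    exact integral_mul_max_neg_log_le hU0 hρ0 hN hmom hα.le
      (integrable_exp_neg_one_sub_mul (hUexp α hα)) (hC α hα)
  refine ⟨hC, hN, fEnergy_ne_bot hβ.le hρ0 hN, fun α hα _ => ?_, fun α hα hαβ =>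
    coe_le_fEnergy hβ.le hρ0 hN (sub_le_fEnergySubEntP_of_entropy_le hβ hρ0 hαβ (hent α hα))⟩
  rw [hM]
  exact coe_add_inv_mul_entP_le_fEnergy_add hρ0 hN
    (le_fEnergySubEntP_add_of_entropy_le hβ (hent α hα))

/-- Propositions B.1 and B.2, lower bound on the free energy: assume
`R ≥ 0` and `∫exp(−bg) < ∞` for all `b > 0`.  For `α > 0` the constant
`C(α) = 1 + ∫∫(1+αg+α|r|²/2)e^{−1−αg−α|r|²/2}` is finite.  For `β > 0` and a
probability density `ρ` on `ℝ^d × ℝ^d` with `∫∫(g+|r|²/2)ρ < ∞` and `Ψ` Bochner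
integrable against the `θ`-marginal, `∫∫ρ log ρ` and `E(ρ)` are well-defined in
`(−∞,∞]`, and for every `0 < α ≤ β`:
`F₀([ρ]^θ) + (1−α/β)∫∫(g+|r|²/2)ρ + β⁻¹∫∫ρlog⁺ρ ≤ E(ρ) + C(α)/β`;
in particular `E(ρ) ≥ F₀([ρ]^θ) + (1−α/β)∫g[ρ]^θ − C(α)/β`. -/
theorem stmt_6 {d : ℕ} {F : Type*} [NormedAddCommGroup F] [InnerProductSpace ℝ F]
    [CompleteSpace F]
    (R : F → ℝ) (hR0 : ∀ ψ, 0 ≤ R ψ)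
    (Ψ : EuclideanSpace ℝ (Fin d) → F)
    (g : EuclideanSpace ℝ (Fin d) → ℝ) (hg0 : ∀ θ, 0 ≤ g θ) (hgmeas : Measurable g)
    (hgexp : ∀ b : ℝ, 0 < b → Integrable fun θ => Real.exp (-b * g θ))
    (β : ℝ) (hβ : 0 < β)
    (ρ : EuclideanSpace ℝ (Fin d) × EuclideanSpace ℝ (Fin d) → ℝ)
    (hρmeas : Measurable ρ) (hρ0 : 0 ≤ ρ) (hρint : Integrable ρ) (hρ1 : (∫ p, ρ p) = 1)
    (hmom : Integrable fun p : EuclideanSpace ℝ (Fin d) × EuclideanSpace ℝ (Fin d) =>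
      (g p.1 + ‖p.2‖ ^ 2 / 2) * ρ p)
    (hΨm : Integrable fun θ => (∫ r, ρ (θ, r)) • Ψ θ) :
    (∀ α : ℝ, 0 < α →
      Integrable fun p : EuclideanSpace ℝ (Fin d) × EuclideanSpace ℝ (Fin d) =>
        (1 + α * g p.1 + α * (‖p.2‖ ^ 2 / 2)) *
          Real.exp (-1 - α * g p.1 - α * (‖p.2‖ ^ 2 / 2))) ∧
    (Integrable fun p : EuclideanSpace ℝ (Fin d) × EuclideanSpace ℝ (Fin d) =>
      ρ p * max (-Real.log (ρ p)) 0) ∧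
    fEnergy R Ψ g β ρ ≠ ⊥ ∧
    (∀ α : ℝ, 0 < α → α ≤ β →
      ((R (∫ θ, (∫ r, ρ (θ, r)) • Ψ θ)
          + (1 - α / β) * ∫ p, (g p.1 + ‖p.2‖ ^ 2 / 2) * ρ p : ℝ) : EReal)
          + ((β⁻¹ : ℝ) : EReal) * ((entP ρ : ℝ≥0∞) : EReal)
        ≤ fEnergy R Ψ g β ρ
          + (((1 + ∫ p : EuclideanSpace ℝ (Fin d) × EuclideanSpace ℝ (Fin d),
                (1 + α * g p.1 + α * (‖p.2‖ ^ 2 / 2)) *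
                  Real.exp (-1 - α * g p.1 - α * (‖p.2‖ ^ 2 / 2))) / β : ℝ) : EReal)) ∧
    (∀ α : ℝ, 0 < α → α ≤ β →
      ((R (∫ θ, (∫ r, ρ (θ, r)) • Ψ θ)
          + (1 - α / β) * (∫ θ, g θ * ∫ r, ρ (θ, r))
          - (1 + ∫ p : EuclideanSpace ℝ (Fin d) × EuclideanSpace ℝ (Fin d),
                (1 + α * g p.1 + α * (‖p.2‖ ^ 2 / 2)) *
                  Real.exp (-1 - α * g p.1 - α * (‖p.2‖ ^ 2 / 2))) / β : ℝ) : EReal)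
        ≤ fEnergy R Ψ g β ρ) :=
  stmt_6_general R Ψ g hg0 hgmeas hgexp β hβ ρ hρmeas hρ0 hmom
end

section
/- Assume R : ℱ → [0,∞) is convex and Fréchet differentiable, Ψ and g are continuous, and let β > 0. Let K be the set of probability densities ρ on ℝ^d × ℝ^d with ∫∫(g(θ)+|r|²/2)ρ dθdr < ∞ and Ψ Bochner integrable with respect to [ρ]^θ(θ)dθ. Suppose ρ̄ ∈ K satisfies E(ρ̄) < ∞ and E(ρ̄) ≤ E(ρ) for every ρ ∈ K. Then ρ̄ > 0 almost everywhere, i.e., the set {(θ,r) : ρ̄(θ,r) = 0} has Lebesgue measure zero. (Any minimizer of the free energy over K is almost everywhere positive.) -/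
open MeasureTheory Real
open scoped RealInnerProductSpace ENNReal

/-! If the zero set of the minimizer `ρ̄` had positive measure, it would contain a bounded set `W`
of positive finite measure; let `ν` be the uniform density on `W`. Along `ρₜ = (1 - t) ρ̄ + t ν`
every term of the free energy is convex in `t` (the moment terms and `⟨Ψ, ·⟩` are affine, `R` is
convex), and since `ρ̄` and `ν` have disjoint supports the entropy is affine up to the mixing
entropy `(1 - t) log (1 - t) + t log t ≤ t log t`. Hence
`E(ρₜ) ≤ E(ρ̄) + t (E(ν) - E(ρ̄) + β⁻¹ log t)`, which is `< E(ρ̄)` for small `t > 0`. -/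

local notation "ℝ^" d:max => EuclideanSpace ℝ (Fin d)

lemma integrable_iff_lintegral_ofReal_ne_top {α : Type*} [MeasurableSpace α] {μ : Measure α}
    {f : α → ℝ} (hf : AEStronglyMeasurable f μ) :
    Integrable f μ ↔ ∫⁻ x, .ofReal (f x) ∂μ ≠ ⊤ ∧ ∫⁻ x, .ofReal (-f x) ∂μ ≠ ⊤ := by
  have hsplit : ∀ x, ‖f x‖ₑ = .ofReal (f x) + .ofReal (-f x) := by
    intro x
    rcases le_total 0 (f x) with h | h
    · simp [Real.enorm_eq_ofReal h, ENNReal.ofReal_of_nonpos (neg_nonpos.2 h)]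
    · simp [Real.enorm_eq_ofReal_abs, abs_of_nonpos h, ENNReal.ofReal_of_nonpos h]
  rw [← lt_top_iff_ne_top, ← lt_top_iff_ne_top, ← ENNReal.add_lt_top, ← lintegral_add_left'
    hf.aemeasurable.ennreal_ofReal]
  simp only [← hsplit]
  exact ⟨fun h => h.2, fun h => ⟨hf, h⟩⟩

section Marginal

variable {α β E : Type*} [MeasureSpace α] [MeasureSpace β] [SFinite (volume : Measure β)]
  [NormedAddCommGroup E] [NormedSpace ℝ E]

lemma MeasureTheory.Integrable.marginal_smul [CompleteSpace E] {ρ : α × β → ℝ} {Ψ : α → E}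
    (h : Integrable fun p => ρ p • Ψ p.1) : Integrable fun a => (∫ b, ρ (a, b)) • Ψ a :=
  h.integral_prod_left.congr <|
    ae_of_all _ fun a => integral_smul_const (fun b => ρ (a, b)) (Ψ a)

lemma marginal_smul_mix_ae [SFinite (volume : Measure α)] {ρ ν : α × β → ℝ} (hρ : Integrable ρ)
    (hν : Integrable ν) (Ψ : α → E) (s t : ℝ) :
    ∀ᵐ a, (∫ b, (s • ρ + t • ν) (a, b)) • Ψ a
      = s • ((∫ b, ρ (a, b)) • Ψ a) + t • ((∫ b, ν (a, b)) • Ψ a) := by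
  filter_upwards [hρ.prod_right_ae, hν.prod_right_ae] with a hρa hνa
  simp only [Pi.add_apply, Pi.smul_apply, smul_eq_mul]
  rw [integral_add (hρa.const_mul s) (hνa.const_mul t), integral_const_mul, integral_const_mul,
    add_smul, mul_smul, mul_smul]

variable [SFinite (volume : Measure α)] {ρ ν : α × β → ℝ} {Ψ : α → E}

lemma integrable_marginal_smul_mix (hρ : Integrable ρ) (hν : Integrable ν)
    (hρΨ : Integrable fun a => (∫ b, ρ (a, b)) • Ψ a)
    (hνΨ : Integrable fun a => (∫ b, ν (a, b)) • Ψ a) (s t : ℝ) :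
    Integrable fun a => (∫ b, (s • ρ + t • ν) (a, b)) • Ψ a :=
  ((hρΨ.fun_smul s).fun_add (hνΨ.fun_smul t)).congr <|
    (marginal_smul_mix_ae hρ hν Ψ s t).mono fun _ h => h.symm

lemma integral_marginal_smul_mix [CompleteSpace E] (hρ : Integrable ρ) (hν : Integrable ν)
    (hρΨ : Integrable fun a => (∫ b, ρ (a, b)) • Ψ a)
    (hνΨ : Integrable fun a => (∫ b, ν (a, b)) • Ψ a) (s t : ℝ) :
    ∫ a, (∫ b, (s • ρ + t • ν) (a, b)) • Ψ a
      = s • (∫ a, (∫ b, ρ (a, b)) • Ψ a) + t • ∫ a, (∫ b, ν (a, b)) • Ψ a := by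
  rw [integral_congr_ae (marginal_smul_mix_ae hρ hν Ψ s t),
    integral_add (hρΨ.fun_smul s) (hνΨ.fun_smul t), integral_smul, integral_smul]

lemma integral_mul_marginal_mix {g : α → ℝ} (hρ : Integrable ρ) (hν : Integrable ν)
    (hρg : Integrable fun a => g a * ∫ b, ρ (a, b))
    (hνg : Integrable fun a => g a * ∫ b, ν (a, b)) (s t : ℝ) :
    ∫ a, g a * ∫ b, (s • ρ + t • ν) (a, b)
      = s * (∫ a, g a * ∫ b, ρ (a, b)) + t * ∫ a, g a * ∫ b, ν (a, b) := by
  simp only [mul_comm (g _), ← smul_eq_mul] at hρg hνg ⊢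
  exact integral_marginal_smul_mix hρ hν hρg hνg s t

end Marginal

section Mixing

lemma mul_log_mix {a b t : ℝ} (hab : a * b = 0) (ht0 : t ≠ 0) (ht1 : 1 - t ≠ 0) :
    ((1 - t) * a + t * b) * log ((1 - t) * a + t * b)
      = (1 - t) * (a * log a) + t * (b * log b) + (1 - t) * log (1 - t) * a + t * log t * b := by
  rcases mul_eq_zero.1 hab with rfl | rfl
  · by_cases hb : b = 0
    · simp [hb]
    · simp only [mul_zero, zero_add, Real.log_mul ht0 hb]; ring
  · by_cases ha : a = 0
    · simp [ha]
    · simp only [mul_zero, add_zero, Real.log_mul ht1 ha]; ring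

variable {α : Type*} {f h : α → ℝ} {t : ℝ}

lemma mul_log_mix_apply (hfh : ∀ x, f x * h x = 0) (ht0 : t ≠ 0) (ht1 : 1 - t ≠ 0) (x : α) :
    ((1 - t) • f + t • h) x * log (((1 - t) • f + t • h) x)
      = (1 - t) * (f x * log (f x)) + t * (h x * log (h x))
        + (1 - t) * log (1 - t) * f x + t * log t * h x := by
  simpa only [Pi.add_apply, Pi.smul_apply, smul_eq_mul] using mul_log_mix (hfh x) ht0 ht1

variable [MeasurableSpace α] {μ : Measure α} (hfh : ∀ x, f x * h x = 0) (ht0 : t ≠ 0)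
  (ht1 : 1 - t ≠ 0) (hf : Integrable f μ) (hh : Integrable h μ)
  (hfl : Integrable (fun x => f x * log (f x)) μ) (hhl : Integrable (fun x => h x * log (h x)) μ)
include hfh ht0 ht1 hf hh hfl hhl

lemma integrable_mul_log_mix :
    Integrable (fun x => ((1 - t) • f + t • h) x * log (((1 - t) • f + t • h) x)) μ := by
  simp only [mul_log_mix_apply hfh ht0 ht1]
  exact (((hfl.const_mul _).fun_add (hhl.const_mul _)).fun_add (hf.const_mul _)).fun_add
    (hh.const_mul _)

lemma integral_mul_log_mix :
    ∫ x, ((1 - t) • f + t • h) x * log (((1 - t) • f + t • h) x) ∂μ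
      = (1 - t) * ∫ x, f x * log (f x) ∂μ + t * ∫ x, h x * log (h x) ∂μ
        + (1 - t) * log (1 - t) * ∫ x, f x ∂μ + t * log t * ∫ x, h x ∂μ := by
  simp only [mul_log_mix_apply hfh ht0 ht1]
  rw [integral_add (((hfl.const_mul _).fun_add (hhl.const_mul _)).fun_add (hf.const_mul _))
      (hh.const_mul _), integral_add ((hfl.const_mul _).fun_add (hhl.const_mul _))
      (hf.const_mul _), integral_add (hfl.const_mul _) (hhl.const_mul _)]
  simp only [integral_const_mul]

end Mixing

lemma ne_top_of_coe_add_mul_sub_mul {a c : ℝ} (hc : 0 < c) {P N : ℝ≥0∞}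
    (htop : (a : EReal) + c * P - c * N ≠ ⊤) (hbot : (a : EReal) + c * P - c * N ≠ ⊥) :
    P ≠ ⊤ ∧ N ≠ ⊤ := by
  by_cases hP : P = ⊤ <;> by_cases hN : N = ⊤
  · simp [hP, hN, EReal.coe_mul_top_of_pos hc] at hbot
  · rw [hP, ← EReal.coe_ennreal_toReal hN] at htop
    simp only [EReal.coe_ennreal_top, EReal.coe_mul_top_of_pos hc, EReal.coe_add_top] at htop
    exact absurd (EReal.top_sub_coe (c * N.toReal)) (by exact_mod_cast htop)
  · rw [hN, ← EReal.coe_ennreal_toReal hP] at hbot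
    simp [EReal.coe_mul_top_of_pos hc] at hbot
  · exact ⟨hP, hN⟩

section FreeEnergy

variable {d : ℕ} {ρ : ℝ^d × ℝ^d → ℝ}

lemma entP_eq_lintegral (hρ : 0 ≤ ρ) : entP ρ = ∫⁻ p, .ofReal (ρ p * log (ρ p)) := by
  unfold entP
  congr 1 with p
  rw [mul_max_of_nonneg _ _ (hρ p), mul_zero, ENNReal.ofReal_max, ENNReal.ofReal_zero,
    max_eq_left zero_le]

lemma entN_eq_lintegral (hρ : 0 ≤ ρ) : entN ρ = ∫⁻ p, .ofReal (-(ρ p * log (ρ p))) := by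
  unfold entN
  congr 1 with p
  rw [mul_max_of_nonneg _ _ (hρ p), mul_zero, mul_neg, ENNReal.ofReal_max, ENNReal.ofReal_zero,
    max_eq_left zero_le]

lemma integrable_mul_log_iff (hρm : Measurable ρ) (hρ : 0 ≤ ρ) :
    Integrable (fun p => ρ p * log (ρ p)) ↔ entP ρ ≠ ⊤ ∧ entN ρ ≠ ⊤ := by
  rw [entP_eq_lintegral hρ, entN_eq_lintegral hρ]
  exact integrable_iff_lintegral_ofReal_ne_top
    (hρm.mul (measurable_log.comp hρm)).aestronglyMeasurable

lemma integral_mul_log_eq_entP_sub_entN (hρ : 0 ≤ ρ)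
    (h : Integrable fun p => ρ p * log (ρ p)) :
    ∫ p, ρ p * log (ρ p) = (entP ρ).toReal - (entN ρ).toReal := by
  rw [entP_eq_lintegral hρ, entN_eq_lintegral hρ]
  exact integral_eq_lintegral_pos_part_sub_lintegral_neg_part h

noncomputable def freeEnergyReal {F : Type*} [NormedAddCommGroup F] [NormedSpace ℝ F]
    (R : F → ℝ) (Ψ : ℝ^d → F) (g : ℝ^d → ℝ) (β : ℝ) (ρ : ℝ^d × ℝ^d → ℝ) : ℝ :=
  R (∫ θ, (∫ r, ρ (θ, r)) • Ψ θ) + (∫ θ, g θ * ∫ r, ρ (θ, r)) + (∫ p, (‖p.2‖ ^ 2 / 2) * ρ p)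
    + β⁻¹ * ∫ p, ρ p * log (ρ p)

variable {F : Type*} [NormedAddCommGroup F] [InnerProductSpace ℝ F] [CompleteSpace F]
  {R : F → ℝ} {Ψ : ℝ^d → F} {g : ℝ^d → ℝ} {β : ℝ}

lemma fEnergy_eq_freeEnergyReal (hρm : Measurable ρ) (hρ : 0 ≤ ρ)
    (h : Integrable fun p => ρ p * log (ρ p)) :
    fEnergy R Ψ g β ρ = freeEnergyReal R Ψ g β ρ := by
  obtain ⟨hP, hN⟩ := (integrable_mul_log_iff hρm hρ).1 h
  rw [fEnergy, freeEnergyReal, integral_mul_log_eq_entP_sub_entN hρ h,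
    ← EReal.coe_ennreal_toReal hP, ← EReal.coe_ennreal_toReal hN]
  norm_cast
  ring_nf

lemma integrable_mul_log_of_fEnergy_ne_top (hβ : 0 < β) (hρm : Measurable ρ) (hρ : 0 ≤ ρ)
    (htop : fEnergy R Ψ g β ρ ≠ ⊤) (hbot : fEnergy R Ψ g β ρ ≠ ⊥) :
    Integrable fun p => ρ p * log (ρ p) :=
  (integrable_mul_log_iff hρm hρ).2 (ne_top_of_coe_add_mul_sub_mul (inv_pos.2 hβ) htop hbot)

end FreeEnergy

section Admissible

variable {d : ℕ} {F : Type*} [NormedAddCommGroup F] [NormedSpace ℝ F]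

/-- The class `K` of the statement. -/
structure IsAdmissibleDensity (Ψ : ℝ^d → F) (g : ℝ^d → ℝ) (ρ : ℝ^d × ℝ^d → ℝ) : Prop where
  measurable : Measurable ρ
  nonneg : 0 ≤ ρ
  integrable : Integrable ρ
  integral_eq_one : ∫ p, ρ p = 1
  integrable_moment : Integrable fun p : ℝ^d × ℝ^d => (g p.1 + ‖p.2‖ ^ 2 / 2) * ρ p
  integrable_marginal_smul : Integrable fun θ => (∫ r, ρ (θ, r)) • Ψ θ

namespace IsAdmissibleDensity

variable {Ψ : ℝ^d → F} {g : ℝ^d → ℝ} {ρ ν : ℝ^d × ℝ^d → ℝ}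

lemma mix (hρ : IsAdmissibleDensity Ψ g ρ) (hν : IsAdmissibleDensity Ψ g ν) {t : ℝ}
    (ht0 : 0 ≤ t) (ht1 : t ≤ 1) : IsAdmissibleDensity Ψ g ((1 - t) • ρ + t • ν) where
  measurable := (hρ.measurable.const_smul _).add (hν.measurable.const_smul _)
  nonneg p :=
    add_nonneg (mul_nonneg (sub_nonneg.2 ht1) (hρ.nonneg p)) (mul_nonneg ht0 (hν.nonneg p))
  integrable := (hρ.integrable.smul _).add (hν.integrable.smul _)
  integral_eq_one := by
    rw [integral_add' (hρ.integrable.smul _) (hν.integrable.smul _)]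
    simp only [Pi.smul_apply, integral_smul, hρ.integral_eq_one, hν.integral_eq_one]
    ring
  integrable_moment := by
    refine ((hρ.integrable_moment.const_mul (1 - t)).fun_add
      (hν.integrable_moment.const_mul t)).congr (ae_of_all _ fun p => ?_)
    simp only [Pi.add_apply, Pi.smul_apply, smul_eq_mul]
    ring
  integrable_marginal_smul := integrable_marginal_smul_mix hρ.integrable hν.integrable
    hρ.integrable_marginal_smul hν.integrable_marginal_smul _ _

variable (hρ : IsAdmissibleDensity Ψ g ρ) (hg0 : ∀ θ, 0 ≤ g θ)
include hρ hg0

lemma integrable_kinetic : Integrable fun p : ℝ^d × ℝ^d => (‖p.2‖ ^ 2 / 2) * ρ p := by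
  have := hρ.measurable
  refine hρ.integrable_moment.mono' (by fun_prop) (ae_of_all _ fun p => ?_)
  rw [norm_mul, norm_of_nonneg (by positivity), norm_of_nonneg (hρ.nonneg p)]
  exact mul_le_mul_of_nonneg_right (le_add_of_nonneg_left (hg0 _)) (hρ.nonneg p)

lemma integrable_mul_marginal (hg : Measurable g) :
    Integrable fun θ => g θ * ∫ r, ρ (θ, r) := by
  have hgρ : Integrable fun p : ℝ^d × ℝ^d => ρ p • g p.1 := by
    have := hρ.measurable
    refine hρ.integrable_moment.mono' (by fun_prop) (ae_of_all _ fun p => ?_)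
    rw [norm_smul, norm_of_nonneg (hρ.nonneg p), norm_of_nonneg (hg0 _), mul_comm]
    exact mul_le_mul_of_nonneg_right (le_add_of_nonneg_right (by positivity)) (hρ.nonneg p)
  simpa only [smul_eq_mul, mul_comm (g _)] using hgρ.marginal_smul

end IsAdmissibleDensity

end Admissible

lemma freeEnergyReal_mix_le {d : ℕ} {F : Type*} [NormedAddCommGroup F] [NormedSpace ℝ F]
    [CompleteSpace F] {R : F → ℝ} {Ψ : ℝ^d → F} {g : ℝ^d → ℝ} {β : ℝ} {ρ ν : ℝ^d × ℝ^d → ℝ}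
    (hR : ConvexOn ℝ Set.univ R) (hg0 : ∀ θ, 0 ≤ g θ) (hg : Measurable g) (hβ : 0 ≤ β)
    (hρ : IsAdmissibleDensity Ψ g ρ) (hν : IsAdmissibleDensity Ψ g ν)
    (hρν : ∀ p, ρ p * ν p = 0)
    (hρl : Integrable fun p => ρ p * log (ρ p)) (hνl : Integrable fun p => ν p * log (ν p))
    {t : ℝ} (ht0 : 0 < t) (ht1 : t < 1) :
    freeEnergyReal R Ψ g β ((1 - t) • ρ + t • ν)
      ≤ (1 - t) * freeEnergyReal R Ψ g β ρ + t * freeEnergyReal R Ψ g β ν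
        + β⁻¹ * (t * log t) := by
  have hR_mix : R (∫ θ, (∫ r, ((1 - t) • ρ + t • ν) (θ, r)) • Ψ θ)
      ≤ (1 - t) * R (∫ θ, (∫ r, ρ (θ, r)) • Ψ θ) + t * R (∫ θ, (∫ r, ν (θ, r)) • Ψ θ) := by
    rw [integral_marginal_smul_mix hρ.integrable hν.integrable hρ.integrable_marginal_smul
      hν.integrable_marginal_smul]
    exact hR.2 (Set.mem_univ _) (Set.mem_univ _) (by linarith) ht0.le (by ring)
  have hG_mix := integral_mul_marginal_mix hρ.integrable hν.integrable
    (hρ.integrable_mul_marginal hg0 hg) (hν.integrable_mul_marginal hg0 hg) (1 - t) t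
  have hK_mix : ∫ p : ℝ^d × ℝ^d, (‖p.2‖ ^ 2 / 2) * ((1 - t) • ρ + t • ν) p
      = (1 - t) * (∫ p : ℝ^d × ℝ^d, (‖p.2‖ ^ 2 / 2) * ρ p)
        + t * ∫ p : ℝ^d × ℝ^d, (‖p.2‖ ^ 2 / 2) * ν p := by
    simp only [Pi.add_apply, Pi.smul_apply, smul_eq_mul, mul_add, mul_left_comm _ (1 - t),
      mul_left_comm _ t]
    rw [integral_add ((hρ.integrable_kinetic hg0).const_mul _)
      ((hν.integrable_kinetic hg0).const_mul _), integral_const_mul, integral_const_mul]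
  have hH_mix :=
    integral_mul_log_mix hρν ht0.ne' (by linarith) hρ.integrable hν.integrable hρl hνl
  have hlog : β⁻¹ * ((1 - t) * log (1 - t)) ≤ 0 :=
    mul_nonpos_of_nonneg_of_nonpos (inv_nonneg.2 hβ)
      (mul_nonpos_of_nonneg_of_nonpos (by linarith) (log_nonpos (by linarith) (by linarith)))
  rw [hρ.integral_eq_one, hν.integral_eq_one] at hH_mix
  simp only [freeEnergyReal, hG_mix, hK_mix, hH_mix]
  linear_combination hR_mix + hlog

section Uniform

variable {X : Type*} [MeasureSpace X] {W : Set X}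

noncomputable def uniformDensity (W : Set X) : X → ℝ :=
  W.indicator fun _ => (volume W).toReal⁻¹

lemma mul_uniformDensity_eq_zero {ρ : X → ℝ} (hW : W ⊆ {p | ρ p = 0}) (p : X) :
    ρ p * uniformDensity W p = 0 := by
  by_cases hp : p ∈ W
  · rw [show ρ p = 0 from hW hp, zero_mul]
  · rw [uniformDensity, Set.indicator_of_notMem hp, mul_zero]

variable (hW : MeasurableSet W)
include hW

lemma measurable_uniformDensity : Measurable (uniformDensity W) :=
  measurable_const.indicator hW

lemma integrable_uniformDensity (hWtop : volume W ≠ ⊤) : Integrable (uniformDensity W) :=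
  (integrable_indicator_iff hW).2 (integrableOn_const hWtop)

lemma integral_uniformDensity (hW0 : volume W ≠ 0) (hWtop : volume W ≠ ⊤) :
    ∫ p, uniformDensity W p = 1 := by
  rw [uniformDensity, integral_indicator_const _ hW, smul_eq_mul, measureReal_def,
    mul_inv_cancel₀ (ENNReal.toReal_ne_zero.2 ⟨hW0, hWtop⟩)]

lemma integrable_uniformDensity_mul_log (hWtop : volume W ≠ ⊤) :
    Integrable fun p => uniformDensity W p * log (uniformDensity W p) := by
  have h : (fun p => uniformDensity W p * log (uniformDensity W p))
      = W.indicator fun _ => (volume W).toReal⁻¹ * log (volume W).toReal⁻¹ := by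
    ext p
    by_cases hp : p ∈ W <;> simp [uniformDensity, hp]
  rw [h, integrable_indicator_iff hW]
  exact integrableOn_const hWtop

lemma integrable_uniformDensity_smul {E : Type*} [NormedAddCommGroup E] [NormedSpace ℝ E]
    [MetricSpace X] [ProperSpace X] [OpensMeasurableSpace X]
    [IsFiniteMeasureOnCompacts (volume : Measure X)] {f : X → E} (hf : Continuous f)
    (hWb : Bornology.IsBounded W) : Integrable fun p => uniformDensity W p • f p := by
  have h : (fun p => uniformDensity W p • f p)
      = W.indicator fun p => (volume W).toReal⁻¹ • f p := by
    ext p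
    by_cases hp : p ∈ W <;> simp [uniformDensity, hp]
  rw [h, integrable_indicator_iff hW]
  exact ((hf.const_smul _).continuousOn.integrableOn_compact hWb.isCompact_closure).mono_set
    subset_closure

end Uniform

lemma isAdmissibleDensity_uniformDensity {d : ℕ} {F : Type*} [NormedAddCommGroup F]
    [NormedSpace ℝ F] [CompleteSpace F] {Ψ : ℝ^d → F} {g : ℝ^d → ℝ} {W : Set (ℝ^d × ℝ^d)}
    (hΨ : Continuous Ψ) (hg : Continuous g) (hW : MeasurableSet W)
    (hWb : Bornology.IsBounded W) (hW0 : volume W ≠ 0) :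
    IsAdmissibleDensity Ψ g (uniformDensity W) where
  measurable := measurable_uniformDensity hW
  nonneg _ := Set.indicator_nonneg (fun _ _ => inv_nonneg.2 ENNReal.toReal_nonneg) _
  integrable := integrable_uniformDensity hW hWb.measure_lt_top.ne
  integral_eq_one := integral_uniformDensity hW hW0 hWb.measure_lt_top.ne
  integrable_moment := by
    simpa only [smul_eq_mul, mul_comm] using
      integrable_uniformDensity_smul hW (by fun_prop : Continuous fun p : ℝ^d × ℝ^d =>
        g p.1 + ‖p.2‖ ^ 2 / 2) hWb
  integrable_marginal_smul :=
    (integrable_uniformDensity_smul hW (hΨ.comp continuous_fst) hWb).marginal_smul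

lemma exists_measure_inter_ball_ne_zero {X : Type*} [PseudoMetricSpace X] [MeasurableSpace X]
    {μ : Measure X} {s : Set X} (hs : μ s ≠ 0) (x : X) :
    ∃ n : ℕ, μ (s ∩ Metric.ball x n) ≠ 0 := by
  by_contra! h
  apply hs
  rw [← Set.inter_univ s, ← Metric.iUnion_ball_nat x, Set.inter_iUnion]
  exact measure_iUnion_null h

lemma exists_mul_add_inv_mul_mul_log_neg {β : ℝ} (hβ : 0 < β) (C : ℝ) :
    ∃ t, 0 < t ∧ t < 1 ∧ t * C + β⁻¹ * (t * log t) < 0 := by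
  refine ⟨exp (-(β * (|C| + 1))), exp_pos _, exp_lt_one_iff.2 (by nlinarith [abs_nonneg C]), ?_⟩
  rw [log_exp, show β⁻¹ * (exp (-(β * (|C| + 1))) * -(β * (|C| + 1)))
    = -(exp (-(β * (|C| + 1))) * (|C| + 1)) by field_simp]
  nlinarith [exp_pos (-(β * (|C| + 1))), le_abs_self C]

theorem stmt_14_general {d : ℕ} {F : Type*} [NormedAddCommGroup F] [InnerProductSpace ℝ F]
    [CompleteSpace F]
    (R : F → ℝ) (hRconv : ConvexOn ℝ Set.univ R)
    (Ψ : EuclideanSpace ℝ (Fin d) → F) (hΨcont : Continuous Ψ)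
    (g : EuclideanSpace ℝ (Fin d) → ℝ) (hg0 : ∀ θ, 0 ≤ g θ) (hgcont : Continuous g)
    (β : ℝ) (hβ : 0 < β)
    (ρb : EuclideanSpace ℝ (Fin d) × EuclideanSpace ℝ (Fin d) → ℝ)
    (hρbmeas : Measurable ρb) (hρb0 : 0 ≤ ρb) (hρbint : Integrable ρb)
    (hρb1 : (∫ p, ρb p) = 1)
    (hρbmom : Integrable fun p : EuclideanSpace ℝ (Fin d) × EuclideanSpace ℝ (Fin d) =>
      (g p.1 + ‖p.2‖ ^ 2 / 2) * ρb p)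
    (hρbΨ : Integrable fun θ => (∫ r, ρb (θ, r)) • Ψ θ)
    (hfin_top : fEnergy R Ψ g β ρb ≠ ⊤) (hfin_bot : fEnergy R Ψ g β ρb ≠ ⊥)
    (hmin : ∀ ρ : EuclideanSpace ℝ (Fin d) × EuclideanSpace ℝ (Fin d) → ℝ,
      Measurable ρ → 0 ≤ ρ → Integrable ρ → (∫ p, ρ p) = 1 →
      (Integrable fun p : EuclideanSpace ℝ (Fin d) × EuclideanSpace ℝ (Fin d) =>
        (g p.1 + ‖p.2‖ ^ 2 / 2) * ρ p) →
      (Integrable fun θ => (∫ r, ρ (θ, r)) • Ψ θ) →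
      fEnergy R Ψ g β ρb ≤ fEnergy R Ψ g β ρ) :
    volume {p : EuclideanSpace ℝ (Fin d) × EuclideanSpace ℝ (Fin d) | ρb p = 0} = 0 := by
  by_contra hZ
  obtain ⟨n, hn⟩ := exists_measure_inter_ball_ne_zero hZ 0
  set W := {p | ρb p = 0} ∩ Metric.ball 0 (n : ℝ)
  have hWm : MeasurableSet W := (hρbmeas (measurableSet_singleton 0)).inter measurableSet_ball
  have hWb : Bornology.IsBounded W := Metric.isBounded_ball.subset Set.inter_subset_right
  have hρb : IsAdmissibleDensity Ψ g ρb := ⟨hρbmeas, hρb0, hρbint, hρb1, hρbmom, hρbΨ⟩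
  have hν := isAdmissibleDensity_uniformDensity hΨcont hgcont hWm hWb hn
  have hρbl := integrable_mul_log_of_fEnergy_ne_top hβ hρbmeas hρb0 hfin_top hfin_bot
  have hνl := integrable_uniformDensity_mul_log hWm hWb.measure_lt_top.ne
  have hdisj := mul_uniformDensity_eq_zero (Set.inter_subset_left : W ⊆ {p | ρb p = 0})
  obtain ⟨t, ht0, ht1, hneg⟩ := exists_mul_add_inv_mul_mul_log_neg hβ
    (freeEnergyReal R Ψ g β (uniformDensity W) - freeEnergyReal R Ψ g β ρb)
  have hmix := hρb.mix hν ht0.le ht1.le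
  have hle := hmin _ hmix.measurable hmix.nonneg hmix.integrable hmix.integral_eq_one
    hmix.integrable_moment hmix.integrable_marginal_smul
  rw [fEnergy_eq_freeEnergyReal hρbmeas hρb0 hρbl, fEnergy_eq_freeEnergyReal hmix.measurable
    hmix.nonneg (integrable_mul_log_mix hdisj ht0.ne' (by linarith) hρbint hν.integrable hρbl
    hνl), EReal.coe_le_coe_iff] at hle
  have := freeEnergyReal_mix_le hRconv hg0 hgcont.measurable hβ.le hρb hν hdisj hρbl hνl ht0 ht1
  linarith

/-- positivity of free-energy minimizers: assume `R` is convex, Fréchet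
differentiable and nonnegative, `Ψ` and `g` continuous, `β > 0`.  If `ρ̄` belongs to
the class `K` of probability densities on `ℝ^d × ℝ^d` with finite `g`- and kinetic
moments and `Ψ` integrable against the `θ`-marginal, `E(ρ̄)` is finite, and
`E(ρ̄) ≤ E(ρ)` for all `ρ ∈ K`, then `ρ̄ > 0` almost everywhere, i.e. the zero set of
`ρ̄` is Lebesgue-null. -/
theorem stmt_14 {d : ℕ} {F : Type*} [NormedAddCommGroup F] [InnerProductSpace ℝ F]
    [CompleteSpace F]
    (R : F → ℝ) (hR0 : ∀ ψ, 0 ≤ R ψ) (hRconv : ConvexOn ℝ Set.univ R)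
    (hRdiff : Differentiable ℝ R)
    (Ψ : EuclideanSpace ℝ (Fin d) → F) (hΨcont : Continuous Ψ)
    (g : EuclideanSpace ℝ (Fin d) → ℝ) (hg0 : ∀ θ, 0 ≤ g θ) (hgcont : Continuous g)
    (β : ℝ) (hβ : 0 < β)
    (ρb : EuclideanSpace ℝ (Fin d) × EuclideanSpace ℝ (Fin d) → ℝ)
    (hρbmeas : Measurable ρb) (hρb0 : 0 ≤ ρb) (hρbint : Integrable ρb)
    (hρb1 : (∫ p, ρb p) = 1)
    (hρbmom : Integrable fun p : EuclideanSpace ℝ (Fin d) × EuclideanSpace ℝ (Fin d) =>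
      (g p.1 + ‖p.2‖ ^ 2 / 2) * ρb p)
    (hρbΨ : Integrable fun θ => (∫ r, ρb (θ, r)) • Ψ θ)
    (hfin_top : fEnergy R Ψ g β ρb ≠ ⊤) (hfin_bot : fEnergy R Ψ g β ρb ≠ ⊥)
    (hmin : ∀ ρ : EuclideanSpace ℝ (Fin d) × EuclideanSpace ℝ (Fin d) → ℝ,
      Measurable ρ → 0 ≤ ρ → Integrable ρ → (∫ p, ρ p) = 1 →
      (Integrable fun p : EuclideanSpace ℝ (Fin d) × EuclideanSpace ℝ (Fin d) =>
        (g p.1 + ‖p.2‖ ^ 2 / 2) * ρ p) →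
      (Integrable fun θ => (∫ r, ρ (θ, r)) • Ψ θ) →
      fEnergy R Ψ g β ρb ≤ fEnergy R Ψ g β ρ) :
    volume {p : EuclideanSpace ℝ (Fin d) × EuclideanSpace ℝ (Fin d) | ρb p = 0} = 0 :=
  stmt_14_general R hRconv Ψ hΨcont g hg0 hgcont β hβ ρb hρbmeas hρb0 hρbint hρb1 hρbmom hρbΨ
    hfin_top hfin_bot hmin
end
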